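/- arXiv:1211.2717 — 5 statements merged into one kernel-verified Lean document; each statement's English description precedes it below -/
import Mathlib

section
/- Let λ > 0, n ≥ 1, γ ≥ 0, and s ∈ [0,1]. Let X ∈ ℝ^{d×k}, let φ : ℝ^k → ℝ be convex with conjugate φ* that is γ-strongly convex with respect to ‖·‖_D on its effective domain, and let g* : ℝ^d → ℝ be differentiable and 1-smooth with respect to ‖·‖_{D'}, i.e. g*(v + Δ) ≤ g*(v) + ∇g*(v)ᵀΔ + ½‖Δ‖_{D'}² for all v, Δ. Let v ∈ ℝ^d, w = ∇g*(v), let u ∈ ℝ^k satisfy −u ∈ ∂φ(Xᵀw), and let α ∈ ℝ^k with φ*(−α) < ∞. Then [−φ*(−(α + s(u − α))) − λn·g*(v + (λn)^{-1} s X(u − α))] − [−φ*(−α) − λn·g*(v)] ≥ s[ φ(Xᵀw) + φ*(−α) + wᵀXα + (γ(1 − s)/2 − s‖X‖²/(2λn)) ‖u − α‖_D² ]. -/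
/-!
At the subgradient point the Fenchel–Young inequality is an equality, so
`φ*(−u) = −wᵀXu − φ(Xᵀw)`. Strong convexity of `φ*` on the segment from `−α` to `−u` then
bounds `φ*(−(α + s(u − α)))`, while 1-smoothness of `g*` together with
`‖X(u − α)‖_{D'} ≤ ‖X‖ ‖u − α‖_D` bounds the change of `λn g*`. Adding the two bounds, the
terms `s wᵀXu` cancel.
-/

open Matrix

section DualNorm

variable {ι : Type*} [Fintype ι] {NP : (ι → ℝ) → ℝ}

lemma eq_zero_of_isLUB_dualNorm_zero {a : ℝ}
    (h : IsLUB {r : ℝ | ∃ x : ι → ℝ, NP x = 1 ∧ r = (0 : ι → ℝ) ⬝ᵥ x} a) : a = 0 := by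
  obtain ⟨r, x, hx, -⟩ := h.nonempty
  have hset : {r : ℝ | ∃ x : ι → ℝ, NP x = 1 ∧ r = (0 : ι → ℝ) ⬝ᵥ x} = {0} := by
    ext r
    simp only [zero_dotProduct, Set.mem_ofPred_eq, Set.mem_singleton_iff]
    exact ⟨fun ⟨_, _, hr⟩ => hr, fun hr => ⟨x, hx, hr⟩⟩
  rw [hset] at h
  exact h.unique isLUB_singleton

lemma pos_of_mem_upperBounds_dualNorm (hNP_nonneg : ∀ x, 0 ≤ NP x)
    (hNP_eq_zero : ∀ x, NP x = 0 ↔ x = 0) (hNP_smul : ∀ (c : ℝ) x, NP (c • x) = |c| * NP x)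
    {z : ι → ℝ} {a : ℝ} (ha : a ∈ upperBounds {r : ℝ | ∃ x : ι → ℝ, NP x = 1 ∧ r = z ⬝ᵥ x})
    (hz : z ≠ 0) : 0 < a := by
  have hNPz : 0 < NP z := (hNP_nonneg z).lt_of_ne' (mt (hNP_eq_zero z).1 hz)
  have hunit : NP ((NP z)⁻¹ • z) = 1 := by
    rw [hNP_smul, abs_of_pos (inv_pos.2 hNPz), inv_mul_cancel₀ hNPz.ne']
  calc 0 < (NP z)⁻¹ * (z ⬝ᵥ z) := mul_pos (inv_pos.2 hNPz) (dotProduct_self_star_pos_iff.2 hz)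
    _ = z ⬝ᵥ ((NP z)⁻¹ • z) := by rw [dotProduct_smul, smul_eq_mul]
    _ ≤ a := ha ⟨_, hunit, rfl⟩

end DualNorm

lemma le_mul_of_mem_upperBounds_ratio {ι κ : Type*} [Fintype ι] {ND : (ι → ℝ) → ℝ}
    {ND' : (κ → ℝ) → ℝ} {X : Matrix κ ι ℝ} {XN : ℝ}
    (hXN : XN ∈ upperBounds {r : ℝ | ∃ z : ι → ℝ, z ≠ 0 ∧ r = ND' (X *ᵥ z) / ND z})
    (hND_zero : ND 0 = 0) (hND_pos : ∀ z, z ≠ 0 → 0 < ND z)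
    (hND'_smul : ∀ (c : ℝ) x, ND' (c • x) = |c| * ND' x) (z : ι → ℝ) :
    ND' (X *ᵥ z) ≤ XN * ND z := by
  rcases eq_or_ne z 0 with rfl | hz
  · have hND'_zero : ND' 0 = 0 := by simpa using hND'_smul 0 0
    simp [hND'_zero, hND_zero]
  · exact (div_le_iff₀ (hND_pos z hz)).1 (hXN ⟨z, hz, rfl⟩)

section Conjugate

variable {ι : Type*} [Fintype ι]

noncomputable def convexConjugate (φ : (ι → ℝ) → ℝ) (z : ι → ℝ) : EReal :=
  ⨆ x : ι → ℝ, ((x ⬝ᵥ z - φ x : ℝ) : EReal)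

lemma convexConjugate_ne_bot (φ : (ι → ℝ) → ℝ) (z : ι → ℝ) : convexConjugate φ z ≠ ⊥ :=
  ne_bot_of_le_ne_bot (EReal.coe_ne_bot _) (le_iSup (fun x => ((x ⬝ᵥ z - φ x : ℝ) : EReal)) 0)

lemma convexConjugate_eq_of_subgradient {φ : (ι → ℝ) → ℝ} {x₀ y : ι → ℝ}
    (hy : ∀ x, φ x₀ + y ⬝ᵥ (x - x₀) ≤ φ x) :
    convexConjugate φ y = ((x₀ ⬝ᵥ y - φ x₀ : ℝ) : EReal) := by
  refine le_antisymm (iSup_le fun x => EReal.coe_le_coe_iff.2 ?_)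
    (le_iSup (fun x => ((x ⬝ᵥ y - φ x : ℝ) : EReal)) x₀)
  have := hy x
  rw [dotProduct_sub, dotProduct_comm y x, dotProduct_comm y x₀] at this
  linarith

end Conjugate

lemma exists_coe_le_of_strongly_convex {ι : Type*} {f : (ι → ℝ) → EReal}
    {ND : (ι → ℝ) → ℝ} {γ : ℝ} (hf : ∀ z, f z ≠ ⊥)
    (hsc : ∀ (p q : ι → ℝ) (t : ℝ), 0 ≤ t → t ≤ 1 →
      f (t • p + (1 - t) • q) ≤ ((t : ℝ) : EReal) * f p + ((1 - t : ℝ) : EReal) * f q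
        - ((γ * t * (1 - t) / 2 * ND (p - q) ^ 2 : ℝ) : EReal))
    {α β : ι → ℝ} {A B s : ℝ} (hA : f (-α) = A) (hB : f (-β) = B) (hs : s ∈ Set.Icc (0 : ℝ) 1) :
    ∃ M : ℝ, f (-(α + s • (β - α))) = M ∧
      M ≤ (1 - s) * A + s * B - γ * (1 - s) * s / 2 * ND (β - α) ^ 2 := by
  have h := hsc (-α) (-β) (1 - s) (by linarith [hs.2]) (by linarith [hs.1])
  rw [sub_sub_cancel, hA, hB, show (1 - s) • -α + s • -β = -(α + s • (β - α)) by module,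
    show -α - -β = β - α by abel] at h
  have h' : f (-(α + s • (β - α)))
      ≤ (((1 - s) * A + s * B - γ * (1 - s) * s / 2 * ND (β - α) ^ 2 : ℝ) : EReal) := by
    convert h using 1
    norm_cast
  lift f (-(α + s • (β - α))) to ℝ using ⟨ne_top_of_le_ne_top (EReal.coe_ne_top _) h', hf _⟩
    with M
  exact ⟨M, rfl, EReal.coe_le_coe_iff.1 h'⟩

lemma mul_le_of_smooth {κ : Type*} [Fintype κ] {G : (κ → ℝ) → ℝ} {ND' : (κ → ℝ) → ℝ}
    {grad : (κ → ℝ) → (κ → ℝ)}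
    (hsmooth : ∀ v Δ, G (v + Δ) ≤ G v + grad v ⬝ᵥ Δ + (1 / 2) * ND' Δ ^ 2)
    (hND'_nonneg : ∀ x, 0 ≤ ND' x) (hND'_smul : ∀ (c : ℝ) x, ND' (c • x) = |c| * ND' x)
    {c s b : ℝ} (hc : 0 < c) (hs : 0 ≤ s) (v : κ → ℝ) {Δ : κ → ℝ} (hΔ : ND' Δ ≤ b) :
    c * G (v + c⁻¹ • s • Δ) ≤ c * G v + s * (grad v ⬝ᵥ Δ) + s ^ 2 * b ^ 2 / (2 * c) := by
  have h := hsmooth v (c⁻¹ • s • Δ)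
  rw [dotProduct_smul, dotProduct_smul, smul_eq_mul, smul_eq_mul, hND'_smul, hND'_smul,
    abs_of_pos (inv_pos.2 hc), abs_of_nonneg hs] at h
  calc c * G (v + c⁻¹ • s • Δ)
      ≤ c * (G v + c⁻¹ * (s * grad v ⬝ᵥ Δ) + 1 / 2 * (c⁻¹ * (s * ND' Δ)) ^ 2) := by gcongr
    _ = c * G v + s * (grad v ⬝ᵥ Δ) + s ^ 2 * ND' Δ ^ 2 / (2 * c) := by field_simp
    _ ≤ c * G v + s * (grad v ⬝ᵥ Δ) + s ^ 2 * b ^ 2 / (2 * c) := by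
      gcongr
      exact hND'_nonneg Δ

theorem key_coordinate_inequality_general (d k n : ℕ) (hn : 0 < n)
    (lam γ s : ℝ) (hlam : 0 < lam) (hs : s ∈ Set.Icc (0:ℝ) 1)
    (NP : (Fin k → ℝ) → ℝ)
    (hNP_nonneg : ∀ x, 0 ≤ NP x)
    (hNP_eq_zero : ∀ x, NP x = 0 ↔ x = 0)
    (hNP_smul : ∀ (c : ℝ) (x : Fin k → ℝ), NP (c • x) = |c| * NP x)
    (ND : (Fin k → ℝ) → ℝ)
    (hND : ∀ z, IsLUB {r : ℝ | ∃ x : Fin k → ℝ, NP x = 1 ∧ r = ∑ j, z j * x j} (ND z))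
    (ND' : (Fin d → ℝ) → ℝ)
    (hND'_nonneg : ∀ x, 0 ≤ ND' x)
    (hND'_smul : ∀ (c : ℝ) (x : Fin d → ℝ), ND' (c • x) = |c| * ND' x)
    (X : Matrix (Fin d) (Fin k) ℝ) (XN : ℝ)
    (hXN : IsLUB {r : ℝ | ∃ z : Fin k → ℝ, z ≠ 0 ∧ r = ND' (X.mulVec z) / ND z} XN)
    (φ : (Fin k → ℝ) → ℝ)
    (fconj : (Fin k → ℝ) → EReal)
    (hfconj : ∀ z, fconj z = ⨆ x : Fin k → ℝ, ((∑ j, x j * z j - φ x : ℝ) : EReal))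
    -- γ-strong convexity of φ* w.r.t. ‖·‖_D (trivially true outside the
    -- effective domain, where the right-hand side is +∞):
    (hsc : ∀ (p q : Fin k → ℝ) (t : ℝ), 0 ≤ t → t ≤ 1 →
      fconj (t • p + (1 - t) • q) ≤ ((t : ℝ) : EReal) * fconj p
        + ((1 - t : ℝ) : EReal) * fconj q
        - ((γ * t * (1 - t) / 2 * ND (p - q) ^ 2 : ℝ) : EReal))
    -- g* : ℝ^d → ℝ, differentiable with gradient map `Ggrad`, and 1-smooth w.r.t. ‖·‖_{D'}:
    (Gstar : (Fin d → ℝ) → ℝ) (Ggrad : (Fin d → ℝ) → (Fin d → ℝ))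
    (hGsmooth : ∀ v Δ : Fin d → ℝ,
      Gstar (v + Δ) ≤ Gstar v + (∑ j, Ggrad v j * Δ j) + (1 / 2) * ND' Δ ^ 2)
    (v : Fin d → ℝ) (w : Fin d → ℝ) (hw : w = Ggrad v)
    (u : Fin k → ℝ)
    (hsub : ∀ y : Fin k → ℝ,
      φ (X.transpose.mulVec w) + ∑ j, (-(u j)) * (y j - X.transpose.mulVec w j) ≤ φ y)
    (α : Fin k → ℝ) (hαfin : fconj (-α) ≠ ⊤) :
    (-(fconj (-(α + s • (u - α))))
        - ((lam * n * Gstar (v + (lam * n)⁻¹ • X.mulVec (s • (u - α))) : ℝ) : EReal))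
      - (-(fconj (-α)) - ((lam * n * Gstar v : ℝ) : EReal))
    ≥ ((s : ℝ) : EReal) * ((φ (X.transpose.mulVec w) + (fconj (-α)).toReal
        + (∑ j, w j * X.mulVec α j)
        + (γ * (1 - s) / 2 - s * XN ^ 2 / (2 * lam * n)) * ND (u - α) ^ 2 : ℝ) : EReal) := by
  have hc : 0 < lam * n := by positivity
  have hconj : fconj = convexConjugate φ := funext hfconj
  subst hconj
  obtain ⟨A, hA⟩ : ∃ A : ℝ, convexConjugate φ (-α) = A :=
    ⟨_, (EReal.coe_toReal hαfin (convexConjugate_ne_bot φ _)).symm⟩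
  have hB := convexConjugate_eq_of_subgradient (x₀ := Xᵀ *ᵥ w) (y := -u) hsub
  obtain ⟨M, hM, hM_le⟩ :=
    exists_coe_le_of_strongly_convex (convexConjugate_ne_bot φ) hsc hA hB hs
  have hND_pos z (hz : z ≠ 0) : 0 < ND z :=
    pos_of_mem_upperBounds_dualNorm hNP_nonneg hNP_eq_zero hNP_smul (hND z).1 hz
  have hX := le_mul_of_mem_upperBounds_ratio hXN.1 (eq_zero_of_isLUB_dualNorm_zero (hND 0))
    hND_pos hND'_smul (u - α)
  have hG := mul_le_of_smooth hGsmooth hND'_nonneg hND'_smul hc hs.1 v hX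
  have hdot : Ggrad v ⬝ᵥ X *ᵥ (u - α) = w ⬝ᵥ X *ᵥ u - w ⬝ᵥ X *ᵥ α := by
    rw [← hw, mulVec_sub, dotProduct_sub]
  have hTw : (Xᵀ *ᵥ w) ⬝ᵥ -u = -(w ⬝ᵥ X *ᵥ u) := by
    rw [dotProduct_neg, mulVec_transpose, dotProduct_mulVec]
  rw [hTw] at hM_le
  rw [hdot] at hG
  rw [mulVec_smul, hA, hM, EReal.toReal_coe, ge_iff_le]
  norm_cast
  change s * (φ (Xᵀ *ᵥ w) + A + w ⬝ᵥ X *ᵥ α + _) ≤ _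
  linear_combination hM_le + hG

/-- the key per-coordinate inequality (core of Lemma 1 of the paper):
lower bound on the increase of the (proximal) dual objective produced by the step
`Δα = s(u − α)`. -/
theorem key_coordinate_inequality (d k n : ℕ) (hn : 0 < n)
    (lam γ s : ℝ) (hlam : 0 < lam) (hγ : 0 ≤ γ) (hs : s ∈ Set.Icc (0:ℝ) 1)
    (NP : (Fin k → ℝ) → ℝ)
    (hNP_nonneg : ∀ x, 0 ≤ NP x)
    (hNP_eq_zero : ∀ x, NP x = 0 ↔ x = 0)
    (hNP_add : ∀ x y, NP (x + y) ≤ NP x + NP y)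
    (hNP_smul : ∀ (c : ℝ) (x : Fin k → ℝ), NP (c • x) = |c| * NP x)
    (ND : (Fin k → ℝ) → ℝ)
    (hND : ∀ z, IsLUB {r : ℝ | ∃ x : Fin k → ℝ, NP x = 1 ∧ r = ∑ j, z j * x j} (ND z))
    (ND' : (Fin d → ℝ) → ℝ)
    (hND'_nonneg : ∀ x, 0 ≤ ND' x)
    (hND'_eq_zero : ∀ x, ND' x = 0 ↔ x = 0)
    (hND'_add : ∀ x y, ND' (x + y) ≤ ND' x + ND' y)
    (hND'_smul : ∀ (c : ℝ) (x : Fin d → ℝ), ND' (c • x) = |c| * ND' x)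
    (X : Matrix (Fin d) (Fin k) ℝ) (XN : ℝ)
    (hXN : IsLUB {r : ℝ | ∃ z : Fin k → ℝ, z ≠ 0 ∧ r = ND' (X.mulVec z) / ND z} XN)
    (φ : (Fin k → ℝ) → ℝ) (hφconv : ConvexOn ℝ Set.univ φ)
    (fconj : (Fin k → ℝ) → EReal)
    (hfconj : ∀ z, fconj z = ⨆ x : Fin k → ℝ, ((∑ j, x j * z j - φ x : ℝ) : EReal))
    -- γ-strong convexity of φ* w.r.t. ‖·‖_D (trivially true outside the
    -- effective domain, where the right-hand side is +∞):
    (hsc : ∀ (p q : Fin k → ℝ) (t : ℝ), 0 ≤ t → t ≤ 1 →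
      fconj (t • p + (1 - t) • q) ≤ ((t : ℝ) : EReal) * fconj p
        + ((1 - t : ℝ) : EReal) * fconj q
        - ((γ * t * (1 - t) / 2 * ND (p - q) ^ 2 : ℝ) : EReal))
    -- g* : ℝ^d → ℝ, differentiable with gradient map `Ggrad`, and 1-smooth w.r.t. ‖·‖_{D'}:
    (Gstar : (Fin d → ℝ) → ℝ) (Ggrad : (Fin d → ℝ) → (Fin d → ℝ))
    (hGdiff : ∀ v : Fin d → ℝ,
      HasGradientAt (fun x : EuclideanSpace ℝ (Fin d) => Gstar x)
        (WithLp.toLp 2 (Ggrad v) : EuclideanSpace ℝ (Fin d)) (WithLp.toLp 2 v : EuclideanSpace ℝ (Fin d)))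
    (hGsmooth : ∀ v Δ : Fin d → ℝ,
      Gstar (v + Δ) ≤ Gstar v + (∑ j, Ggrad v j * Δ j) + (1 / 2) * ND' Δ ^ 2)
    (v : Fin d → ℝ) (w : Fin d → ℝ) (hw : w = Ggrad v)
    (u : Fin k → ℝ)
    (hsub : ∀ y : Fin k → ℝ,
      φ (X.transpose.mulVec w) + ∑ j, (-(u j)) * (y j - X.transpose.mulVec w j) ≤ φ y)
    (α : Fin k → ℝ) (hαfin : fconj (-α) ≠ ⊤) :
    (-(fconj (-(α + s • (u - α))))
        - ((lam * n * Gstar (v + (lam * n)⁻¹ • X.mulVec (s • (u - α))) : ℝ) : EReal))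
      - (-(fconj (-α)) - ((lam * n * Gstar v : ℝ) : EReal))
    ≥ ((s : ℝ) : EReal) * ((φ (X.transpose.mulVec w) + (fconj (-α)).toReal
        + (∑ j, w j * X.mulVec α j)
        + (γ * (1 - s) / 2 - s * XN ^ 2 / (2 * lam * n)) * ND (u - α) ^ 2 : ℝ) : EReal) :=
  key_coordinate_inequality_general d k n hn lam γ s hlam hs NP hNP_nonneg hNP_eq_zero hNP_smul ND
    hND ND' hND'_nonneg hND'_smul X XN hXN φ fconj hfconj hsc Gstar Ggrad hGsmooth v w hw u hsub α
    hαfin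
end

section
/- Let λ > 0, γ ≥ 0, and s ∈ (0,1]. Assume each conjugate φ_i* is γ-strongly convex with respect to ‖·‖_D on its effective domain, g* is differentiable and 1-smooth with respect to ‖·‖_{D'}, and the Fenchel equality g(∇g*(v)) + g*(v) = vᵀ∇g*(v) holds for all v. Let α ∈ ℝ^{k×n} with each φ_i*(−α_i) finite, let v = v(α), w = ∇g*(v), and for each i let u_i satisfy −u_i ∈ ∂φ_i(X_iᵀw). For each i, let α^{[i]} be obtained from α by adding s(u_i − α_i) to column i only. Then the average dual improvement satisfies (1/n) ∑_{i=1}^n [D(α^{[i]}) − D(α)] ≥ (s/n)(P(w) − D(α)) − (s/n)² G/(2λ), where G = (1/n) ∑_{i=1}^n (‖X_i‖² − γ(1−s)λn/s) ‖u_i − α_i‖_D². -/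
/-!
Each coordinate update is estimated on its own. On the conjugate side, `γ`-strong convexity of
`φᵢ*` along the segment from `-αᵢ` to `-uᵢ` bounds the new value `φᵢ*(-αᵢ - s(uᵢ - αᵢ))`, where
`φᵢ*(-uᵢ) = -uᵢᵀyᵢ - φᵢ(yᵢ)` at `yᵢ = Xᵢᵀw` is the Fenchel–Young equality for the subgradient
`-uᵢ`. On the regularizer side, `1`-smoothness of `g*` bounds the change of `g*` when `v` moves by
`(s/λn) Xᵢ(uᵢ - αᵢ)`, with `‖Xᵢ(uᵢ - αᵢ)‖ ≤ ‖Xᵢ‖ ‖uᵢ - αᵢ‖_D`. The linear terms combine into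
`(s/n)(φᵢ(yᵢ) + φᵢ*(-αᵢ) + αᵢᵀyᵢ)`, and by the Fenchel equality for `g` these Fenchel–Young gaps
average exactly to the duality gap `P(w) - D(α)`.
-/

open Matrix Function

@[norm_cast]
lemma EReal.coe_finset_sum {ι : Type*} (s : Finset ι) (f : ι → ℝ) :
    ((∑ i ∈ s, f i : ℝ) : EReal) = ∑ i ∈ s, (f i : EReal) :=
  map_sum (⟨⟨Real.toEReal, EReal.coe_zero⟩, EReal.coe_add⟩ : ℝ →+ EReal) f s

lemma EReal.coe_mul_sum_neg_sub_coe {ι : Type*} [Fintype ι] (c r : ℝ) {F : ι → EReal}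
    (hF : ∀ i, F i = (F i).toReal) :
    (c : EReal) * ∑ i, -F i - (r : EReal) = ((c * ∑ i, -(F i).toReal - r : ℝ) : EReal) := by
  have h : ∑ i, -F i = ∑ i, ((-(F i).toReal : ℝ) : EReal) :=
    Finset.sum_congr rfl fun i _ => by rw [EReal.coe_neg, ← hF i]
  rw [h]
  norm_cast

lemma Fintype.sum_apply_update {ι β M : Type*} [Fintype ι] [DecidableEq ι] [AddCommGroup M]
    (F : ι → β → M) (α : ι → β) (i : ι) (x : β) :
    ∑ j, F j (update α i x j) = ∑ j, F j (α j) + (F i x - F i (α i)) := by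
  simp only [apply_update F, Finset.sum_update_of_mem (Finset.mem_univ i)]
  rw [← Finset.add_sum_erase _ _ (Finset.mem_univ i), Finset.sdiff_singleton_eq_erase]
  abel

section

variable {ι κ μ : Type*} [Fintype ι]

lemma conj_eq_coe_toReal {f : (ι → ℝ) → ℝ} {F : (ι → ℝ) → EReal}
    (hF : ∀ z, F z = ⨆ x, ((x ⬝ᵥ z - f x : ℝ) : EReal)) {z : ι → ℝ} (hz : F z ≠ ⊤) :
    F z = (F z).toReal := by
  refine (EReal.coe_toReal hz (ne_bot_of_le_ne_bot (EReal.coe_ne_bot (0 ⬝ᵥ z - f 0)) ?_)).symm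
  rw [hF]
  exact le_iSup (fun x => ((x ⬝ᵥ z - f x : ℝ) : EReal)) 0

lemma conj_eq_of_subgradient {f : (ι → ℝ) → ℝ} {x z : ι → ℝ}
    (h : ∀ y, f x + z ⬝ᵥ (y - x) ≤ f y) :
    ⨆ y, ((y ⬝ᵥ z - f y : ℝ) : EReal) = ((x ⬝ᵥ z - f x : ℝ) : EReal) := by
  refine le_antisymm (iSup_le fun y => EReal.coe_le_coe_iff.2 ?_)
    (le_iSup (fun y => ((y ⬝ᵥ z - f y : ℝ) : EReal)) x)
  have := h y
  rw [dotProduct_sub, dotProduct_comm z y, dotProduct_comm z x] at this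
  linarith

lemma conj_update_le {f : (ι → ℝ) → ℝ} {F : (ι → ℝ) → EReal}
    (hF : ∀ z, F z = ⨆ x, ((x ⬝ᵥ z - f x : ℝ) : EReal)) {γ : ℝ} {N : (ι → ℝ) → ℝ}
    (hsc : ∀ (p q : ι → ℝ) (t : ℝ), 0 ≤ t → t ≤ 1 →
      F (t • p + (1 - t) • q) ≤ ((t : ℝ) : EReal) * F p + ((1 - t : ℝ) : EReal) * F q
        - ((γ * t * (1 - t) / 2 * N (p - q) ^ 2 : ℝ) : EReal))
    {a u y : ι → ℝ} (ha : F (-a) ≠ ⊤) (hu : ∀ y', f y + (-u) ⬝ᵥ (y' - y) ≤ f y')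
    {s : ℝ} (hs0 : 0 ≤ s) (hs1 : s ≤ 1) :
    F (-(a + s • (u - a))) ≠ ⊤ ∧ (F (-(a + s • (u - a)))).toReal
      ≤ (1 - s) * (F (-a)).toReal + s * (y ⬝ᵥ -u - f y) - γ * s * (1 - s) / 2 * N (u - a) ^ 2 := by
  have h := hsc (-a) (-u) (1 - s) (by linarith) (by linarith)
  rw [conj_eq_coe_toReal hF ha, hF (-u), conj_eq_of_subgradient hu, sub_sub_cancel,
    neg_sub_neg] at h
  have hle : F (-(a + s • (u - a))) ≤ (((1 - s) * (F (-a)).toReal + s * (y ⬝ᵥ -u - f y)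
      - γ * s * (1 - s) / 2 * N (u - a) ^ 2 : ℝ) : EReal) := by
    convert h using 2
    · module
    · norm_cast
      ring
  have hfin := ne_top_of_le_ne_top (EReal.coe_ne_top _) hle
  rw [conj_eq_coe_toReal hF hfin, EReal.coe_le_coe_iff] at hle
  exact ⟨hfin, hle⟩

lemma dualNorm_pos {NP : (ι → ℝ) → ℝ} (hNP_nonneg : ∀ x, 0 ≤ NP x)
    (hNP_eq_zero : ∀ x, NP x = 0 ↔ x = 0) (hNP_smul : ∀ (c : ℝ) x, NP (c • x) = |c| * NP x)
    {z : ι → ℝ} {c : ℝ} (hc : IsLUB {r : ℝ | ∃ x, NP x = 1 ∧ r = ∑ j, z j * x j} c)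
    (hz : z ≠ 0) : 0 < c := by
  have hpos : 0 < NP z := (hNP_nonneg z).lt_of_ne' (mt (hNP_eq_zero z).1 hz)
  have hunit : NP ((NP z)⁻¹ • z) = 1 := by
    rw [hNP_smul, abs_inv, abs_of_pos hpos, inv_mul_cancel₀ hpos.ne']
  refine lt_of_lt_of_le ?_ (hc.1 ⟨_, hunit, rfl⟩)
  change 0 < z ⬝ᵥ ((NP z)⁻¹ • z)
  rw [dotProduct_smul, smul_eq_mul]
  have : 0 ≤ z ⬝ᵥ z := Finset.sum_nonneg fun j _ => mul_self_nonneg (z j)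
  exact mul_pos (inv_pos.2 hpos) (this.lt_of_ne' (dotProduct_self_eq_zero.not.2 hz))

lemma sq_mulVec_le_of_isLUB {ND : (ι → ℝ) → ℝ} {ND' : (κ → ℝ) → ℝ}
    (hND : ∀ z, z ≠ 0 → 0 < ND z) (hND'_nonneg : ∀ x, 0 ≤ ND' x) (hND'_zero : ND' 0 = 0)
    {M : Matrix κ ι ℝ} {K : ℝ} (hK : IsLUB {r | ∃ z, z ≠ 0 ∧ r = ND' (M *ᵥ z) / ND z} K)
    (z : ι → ℝ) : ND' (M *ᵥ z) ^ 2 ≤ K ^ 2 * ND z ^ 2 := by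
  rcases eq_or_ne z 0 with rfl | hz
  · rw [mulVec_zero, hND'_zero, sq, zero_mul]
    positivity
  · rw [← mul_pow]
    exact pow_le_pow_left₀ (hND'_nonneg _)
      ((div_le_iff₀ (hND z hz)).1 (hK.1 ⟨z, hz, rfl⟩)) 2

lemma smooth_add_smul_mulVec_le [Fintype κ] {ψ : (κ → ℝ) → ℝ}
    {grad : (κ → ℝ) → κ → ℝ} {N : (κ → ℝ) → ℝ} (hN_smul : ∀ (c : ℝ) x, N (c • x) = |c| * N x)
    (hψ : ∀ v Δ, ψ (v + Δ) ≤ ψ v + ∑ j, grad v j * Δ j + 1 / 2 * N Δ ^ 2)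
    (v : κ → ℝ) (M : Matrix κ ι ℝ) (z : ι → ℝ) (c : ℝ) {b : ℝ} (hb : N (M *ᵥ z) ^ 2 ≤ b) :
    ψ (v + c • M *ᵥ z) ≤ ψ v + c * (z ⬝ᵥ (Mᵀ *ᵥ grad v)) + c ^ 2 / 2 * b := by
  have h : ψ (v + c • M *ᵥ z) ≤ ψ v + grad v ⬝ᵥ (c • M *ᵥ z) + 1 / 2 * N (c • M *ᵥ z) ^ 2 :=
    hψ v (c • M *ᵥ z)
  rw [hN_smul, mul_pow, sq_abs, dotProduct_smul, smul_eq_mul, dotProduct_mulVec,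
    ← mulVec_transpose, dotProduct_comm] at h
  have : c ^ 2 / 2 * N (M *ᵥ z) ^ 2 ≤ c ^ 2 / 2 * b := by gcongr
  linarith

lemma sum_mulVec_update_add_smul [DecidableEq ι] [Fintype μ] (X : ι → Matrix κ μ ℝ) (α : ι → μ → ℝ)
    (i : ι) (s : ℝ) (δ : μ → ℝ) :
    ∑ j, X j *ᵥ update α i (α i + s • δ) j = ∑ j, X j *ᵥ α j + s • X i *ᵥ δ := by
  rw [Fintype.sum_apply_update (fun j => (X j *ᵥ ·)), mulVec_add, mulVec_smul, add_sub_cancel_left]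

lemma primal_sub_dual_eq [Fintype κ] [Fintype μ] {n lam gw gv : ℝ} (hn : n ≠ 0) (hlam : lam ≠ 0)
    (X : ι → Matrix κ μ ℝ) (α : ι → μ → ℝ) (w : κ → ℝ) (Φ B : ι → ℝ)
    (hF : gw + gv = w ⬝ᵥ ((1 / (lam * n)) • ∑ i, X i *ᵥ α i)) :
    1 / n * ∑ i, Φ i + lam * gw - (1 / n * ∑ i, -B i - lam * gv)
      = 1 / n * ∑ i, (Φ i + B i + α i ⬝ᵥ ((X i)ᵀ *ᵥ w)) := by
  have hv : w ⬝ᵥ ((1 / (lam * n)) • ∑ i, X i *ᵥ α i)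
      = 1 / (lam * n) * ∑ i, α i ⬝ᵥ ((X i)ᵀ *ᵥ w) := by
    simp only [dotProduct_smul, smul_eq_mul, dotProduct_sum, dotProduct_mulVec, mulVec_transpose,
      dotProduct_comm]
  rw [hv] at hF
  simp only [Finset.sum_add_distrib, Finset.sum_neg_distrib]
  field_simp at hF ⊢
  linear_combination hF

lemma coordinate_gain_ge {n lam s γ b c g₀ g₁ K N φy : ℝ}
    {α u y : ι → ℝ} (hn : 0 < n) (hlam : 0 < lam) (hs : s ≠ 0)
    (hc : c ≤ (1 - s) * b + s * (y ⬝ᵥ -u - φy) - γ * s * (1 - s) / 2 * N ^ 2)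
    (hg : g₁ ≤ g₀ + s / (lam * n) * ((u - α) ⬝ᵥ y) + (s / (lam * n)) ^ 2 / 2 * (K ^ 2 * N ^ 2)) :
    s / n * (φy + b + α ⬝ᵥ y)
        - (s / n) ^ 2 / (2 * lam) * ((K ^ 2 - γ * (1 - s) * lam * n / s) * N ^ 2)
      ≤ 1 / n * (b - c) - lam * (g₁ - g₀) := by
  have key : s / n * (φy + b + α ⬝ᵥ y)
      - (s / n) ^ 2 / (2 * lam) * ((K ^ 2 - γ * (1 - s) * lam * n / s) * N ^ 2)
      = 1 / n * (b - ((1 - s) * b + s * (y ⬝ᵥ -u - φy) - γ * s * (1 - s) / 2 * N ^ 2))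
        - lam * (s / (lam * n) * ((u - α) ⬝ᵥ y) + (s / (lam * n)) ^ 2 / 2 * (K ^ 2 * N ^ 2)) := by
    rw [dotProduct_comm y, neg_dotProduct, sub_dotProduct]
    field_simp
    ring
  rw [key]
  have := mul_le_mul_of_nonneg_left hc (one_div_pos.2 hn).le
  have := mul_le_mul_of_nonneg_left hg hlam.le
  linarith

end

theorem key_lemma_expected_dual_improvement_general (d k n : ℕ) (hn : 0 < n)
    (lam γ s : ℝ) (hlam : 0 < lam) (hs0 : 0 < s) (hs1 : s ≤ 1)
    (NP : (Fin k → ℝ) → ℝ)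
    (hNP_nonneg : ∀ x, 0 ≤ NP x)
    (hNP_eq_zero : ∀ x, NP x = 0 ↔ x = 0)
    (hNP_smul : ∀ (c : ℝ) (x : Fin k → ℝ), NP (c • x) = |c| * NP x)
    (ND : (Fin k → ℝ) → ℝ)
    (hND : ∀ z, IsLUB {r : ℝ | ∃ x : Fin k → ℝ, NP x = 1 ∧ r = ∑ j, z j * x j} (ND z))
    (ND' : (Fin d → ℝ) → ℝ)
    (hND'_nonneg : ∀ x, 0 ≤ ND' x)
    (hND'_smul : ∀ (c : ℝ) (x : Fin d → ℝ), ND' (c • x) = |c| * ND' x)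
    (X : Fin n → Matrix (Fin d) (Fin k) ℝ) (XN : Fin n → ℝ)
    (hXN : ∀ i, IsLUB {r : ℝ | ∃ z : Fin k → ℝ, z ≠ 0 ∧
      r = ND' ((X i).mulVec z) / ND z} (XN i))
    (φ : Fin n → (Fin k → ℝ) → ℝ)
    (fconj : Fin n → (Fin k → ℝ) → EReal)
    (hfconj : ∀ i z, fconj i z = ⨆ x : Fin k → ℝ, ((∑ j, x j * z j - φ i x : ℝ) : EReal))
    -- γ-strong convexity of each φ_i* w.r.t. ‖·‖_D (trivially true outside the
    -- effective domain, where the right-hand side is +∞):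
    (hsc : ∀ i (p q : Fin k → ℝ) (t : ℝ), 0 ≤ t → t ≤ 1 →
      fconj i (t • p + (1 - t) • q) ≤ ((t : ℝ) : EReal) * fconj i p
        + ((1 - t : ℝ) : EReal) * fconj i q
        - ((γ * t * (1 - t) / 2 * ND (p - q) ^ 2 : ℝ) : EReal))
    (g : (Fin d → ℝ) → ℝ)
    (gconj : (Fin d → ℝ) → EReal)
    -- g* is differentiable with gradient map `Ggrad` and 1-smooth w.r.t. ‖·‖_{D'}:
    (Ggrad : (Fin d → ℝ) → (Fin d → ℝ))
    (hGsmooth : ∀ v Δ : Fin d → ℝ,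
      (gconj (v + Δ)).toReal ≤ (gconj v).toReal + (∑ j, Ggrad v j * Δ j)
        + (1 / 2) * ND' Δ ^ 2)
    -- Fenchel equality `g(∇g*(v)) + g*(v) = vᵀ∇g*(v)` for all v:
    (hFenchel : ∀ v : Fin d → ℝ, g (Ggrad v) + (gconj v).toReal = ∑ j, Ggrad v j * v j)
    (P : (Fin d → ℝ) → ℝ)
    (hP : ∀ w, P w = (1 / n) * ∑ i, φ i ((X i).transpose.mulVec w) + lam * g w)
    (vmap : (Fin n → Fin k → ℝ) → (Fin d → ℝ))
    (hvmap : ∀ β, vmap β = (1 / (lam * n)) • ∑ i, (X i).mulVec (β i))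
    (D : (Fin n → Fin k → ℝ) → EReal)
    (hD : ∀ β, D β = ((1 / n : ℝ) : EReal) * (∑ i, -(fconj i (-(β i))))
        - ((lam * (gconj (vmap β)).toReal : ℝ) : EReal))
    (α : Fin n → Fin k → ℝ) (hαfin : ∀ i, fconj i (-(α i)) ≠ ⊤)
    (w : Fin d → ℝ) (hw : w = Ggrad (vmap α))
    (u : Fin n → Fin k → ℝ)
    (hsub : ∀ i (y : Fin k → ℝ),
      φ i ((X i).transpose.mulVec w)
        + ∑ j, (-(u i j)) * (y j - (X i).transpose.mulVec w j) ≤ φ i y)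
    (αupd : Fin n → (Fin n → Fin k → ℝ))
    (hαupd : ∀ i, αupd i = Function.update α i (α i + s • (u i - α i)))
    (G : ℝ)
    (hG : G = (1 / n) * ∑ i, (XN i ^ 2 - γ * (1 - s) * lam * n / s) * ND (u i - α i) ^ 2) :
    ((1 / n : ℝ) : EReal) * (∑ i, (D (αupd i) - D α))
      ≥ ((s / n : ℝ) : EReal) * (((P w : ℝ) : EReal) - D α)
        - (((s / n) ^ 2 * (G / (2 * lam)) : ℝ) : EReal) := by
  have hfconj_dot : ∀ i z, fconj i z = ⨆ x, ((x ⬝ᵥ z - φ i x : ℝ) : EReal) := hfconj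
  have hND_pos : ∀ z, z ≠ 0 → 0 < ND z := fun z =>
    dualNorm_pos hNP_nonneg hNP_eq_zero hNP_smul (hND z)
  set y : Fin n → Fin k → ℝ := fun i => (X i)ᵀ *ᵥ w
  set δ : Fin n → Fin k → ℝ := fun i => u i - α i
  set Dr : (Fin n → Fin k → ℝ) → ℝ := fun β =>
    1 / n * ∑ i, -(fconj i (-(β i))).toReal - lam * (gconj (vmap β)).toReal
  have hDr : ∀ β, (∀ i, fconj i (-(β i)) ≠ ⊤) → D β = Dr β := fun β hβ => by
    rw [hD, EReal.coe_mul_sum_neg_sub_coe _ _ fun i => conj_eq_coe_toReal (hfconj_dot i) (hβ i)]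
  have hconj_upd := fun i => conj_update_le (hfconj_dot i) (hsc i) (hαfin i) (hsub i) hs0.le hs1
  have hfin : ∀ i j, fconj j (-(αupd i j)) ≠ ⊤ := fun i => by
    rw [hαupd, forall_update_iff α fun j a => fconj j (-a) ≠ ⊤]
    exact ⟨(hconj_upd i).1, fun j _ => hαfin j⟩
  have hsmooth : ∀ i, (gconj (vmap (αupd i))).toReal ≤ (gconj (vmap α)).toReal
      + s / (lam * n) * (δ i ⬝ᵥ y i) + (s / (lam * n)) ^ 2 / 2 * (XN i ^ 2 * ND (δ i) ^ 2) := by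
    intro i
    rw [hvmap (αupd i), hαupd, sum_mulVec_update_add_smul, smul_add, smul_smul,
      one_div_mul_eq_div, ← hvmap]
    have h := smooth_add_smul_mulVec_le (ψ := fun x => (gconj x).toReal) hND'_smul hGsmooth
      (vmap α) (X i) (δ i) (s / (lam * n))
      (sq_mulVec_le_of_isLUB hND_pos hND'_nonneg (by simpa using hND'_smul 0 0) (hXN i) _)
    rwa [← hw] at h
  set gap : Fin n → ℝ := fun i => φ i (y i) + (fconj i (-(α i))).toReal + α i ⬝ᵥ y i
  have hgain : ∀ i, s / n * gap i - (s / n) ^ 2 / (2 * lam)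
      * ((XN i ^ 2 - γ * (1 - s) * lam * n / s) * ND (δ i) ^ 2) ≤ Dr (αupd i) - Dr α := by
    intro i
    have hDi : Dr (αupd i) - Dr α = 1 / n * ((fconj i (-(α i))).toReal
        - (fconj i (-(α i + s • δ i))).toReal) - lam * ((gconj (vmap (αupd i))).toReal
        - (gconj (vmap α)).toReal) := by
      simp only [Dr, hαupd, Fintype.sum_apply_update (fun j a => -(fconj j (-a)).toReal)]
      ring
    rw [hDi]
    exact coordinate_gain_ge (Nat.cast_pos.2 hn) hlam hs0.ne' (hconj_upd i).2 (hsmooth i)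
  have hgap : P w - Dr α = 1 / n * ∑ i, gap i := by
    rw [hP]
    exact primal_sub_dual_eq (by positivity) hlam.ne' X α w _ _ (hvmap α ▸ hw ▸ hFenchel (vmap α))
  have hreal : s / n * (P w - Dr α) - (s / n) ^ 2 * (G / (2 * lam))
      ≤ 1 / n * ∑ i, (Dr (αupd i) - Dr α) := by
    calc _ = (1 / n : ℝ) * ∑ i, (s / n * gap i - (s / n) ^ 2 / (2 * lam)
          * ((XN i ^ 2 - γ * (1 - s) * lam * n / s) * ND (δ i) ^ 2)) := by
          rw [hgap, hG, Finset.sum_sub_distrib, ← Finset.mul_sum, ← Finset.mul_sum]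
          ring
      _ ≤ _ := mul_le_mul_of_nonneg_left (Finset.sum_le_sum fun i _ => hgain i) (by positivity)
  have hDupd : ∀ i, D (αupd i) = Dr (αupd i) := fun i => hDr _ (hfin i)
  simp only [hDupd, hDr α hαfin]
  exact_mod_cast hreal

/-- Lemma 1 of the paper (expected dual improvement bound):
averaging the single-coordinate updates `α_i ← α_i + s(u_i − α_i)` gives
`(1/n) ∑_i [D(α^{[i]}) − D(α)] ≥ (s/n)(P(w) − D(α)) − (s/n)² G/(2λ)`. -/
theorem key_lemma_expected_dual_improvement (d k n : ℕ) (hn : 0 < n)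
    (lam γ s : ℝ) (hlam : 0 < lam) (hγ : 0 ≤ γ) (hs0 : 0 < s) (hs1 : s ≤ 1)
    (NP : (Fin k → ℝ) → ℝ)
    (hNP_nonneg : ∀ x, 0 ≤ NP x)
    (hNP_eq_zero : ∀ x, NP x = 0 ↔ x = 0)
    (hNP_add : ∀ x y, NP (x + y) ≤ NP x + NP y)
    (hNP_smul : ∀ (c : ℝ) (x : Fin k → ℝ), NP (c • x) = |c| * NP x)
    (ND : (Fin k → ℝ) → ℝ)
    (hND : ∀ z, IsLUB {r : ℝ | ∃ x : Fin k → ℝ, NP x = 1 ∧ r = ∑ j, z j * x j} (ND z))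
    (ND' : (Fin d → ℝ) → ℝ)
    (hND'_nonneg : ∀ x, 0 ≤ ND' x)
    (hND'_eq_zero : ∀ x, ND' x = 0 ↔ x = 0)
    (hND'_add : ∀ x y, ND' (x + y) ≤ ND' x + ND' y)
    (hND'_smul : ∀ (c : ℝ) (x : Fin d → ℝ), ND' (c • x) = |c| * ND' x)
    (X : Fin n → Matrix (Fin d) (Fin k) ℝ) (XN : Fin n → ℝ)
    (hXN : ∀ i, IsLUB {r : ℝ | ∃ z : Fin k → ℝ, z ≠ 0 ∧
      r = ND' ((X i).mulVec z) / ND z} (XN i))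
    (φ : Fin n → (Fin k → ℝ) → ℝ) (hφconv : ∀ i, ConvexOn ℝ Set.univ (φ i))
    (fconj : Fin n → (Fin k → ℝ) → EReal)
    (hfconj : ∀ i z, fconj i z = ⨆ x : Fin k → ℝ, ((∑ j, x j * z j - φ i x : ℝ) : EReal))
    -- γ-strong convexity of each φ_i* w.r.t. ‖·‖_D (trivially true outside the
    -- effective domain, where the right-hand side is +∞):
    (hsc : ∀ i (p q : Fin k → ℝ) (t : ℝ), 0 ≤ t → t ≤ 1 →
      fconj i (t • p + (1 - t) • q) ≤ ((t : ℝ) : EReal) * fconj i p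
        + ((1 - t : ℝ) : EReal) * fconj i q
        - ((γ * t * (1 - t) / 2 * ND (p - q) ^ 2 : ℝ) : EReal))
    (g : (Fin d → ℝ) → ℝ) (hgconv : ConvexOn ℝ Set.univ g)
    (gconj : (Fin d → ℝ) → EReal)
    (hgconj : ∀ v, gconj v = ⨆ x : Fin d → ℝ, ((∑ j, x j * v j - g x : ℝ) : EReal))
    (hgfin : ∀ v, gconj v ≠ ⊤)
    -- g* is differentiable with gradient map `Ggrad` and 1-smooth w.r.t. ‖·‖_{D'}:
    (Ggrad : (Fin d → ℝ) → (Fin d → ℝ))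
    (hGdiff : ∀ v : Fin d → ℝ,
      HasGradientAt (fun x : EuclideanSpace ℝ (Fin d) => (gconj x).toReal)
        (WithLp.toLp 2 (Ggrad v) : EuclideanSpace ℝ (Fin d)) (WithLp.toLp 2 v : EuclideanSpace ℝ (Fin d)))
    (hGsmooth : ∀ v Δ : Fin d → ℝ,
      (gconj (v + Δ)).toReal ≤ (gconj v).toReal + (∑ j, Ggrad v j * Δ j)
        + (1 / 2) * ND' Δ ^ 2)
    -- Fenchel equality `g(∇g*(v)) + g*(v) = vᵀ∇g*(v)` for all v:
    (hFenchel : ∀ v : Fin d → ℝ, g (Ggrad v) + (gconj v).toReal = ∑ j, Ggrad v j * v j)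
    (P : (Fin d → ℝ) → ℝ)
    (hP : ∀ w, P w = (1 / n) * ∑ i, φ i ((X i).transpose.mulVec w) + lam * g w)
    (vmap : (Fin n → Fin k → ℝ) → (Fin d → ℝ))
    (hvmap : ∀ β, vmap β = (1 / (lam * n)) • ∑ i, (X i).mulVec (β i))
    (D : (Fin n → Fin k → ℝ) → EReal)
    (hD : ∀ β, D β = ((1 / n : ℝ) : EReal) * (∑ i, -(fconj i (-(β i))))
        - ((lam * (gconj (vmap β)).toReal : ℝ) : EReal))
    (α : Fin n → Fin k → ℝ) (hαfin : ∀ i, fconj i (-(α i)) ≠ ⊤)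
    (w : Fin d → ℝ) (hw : w = Ggrad (vmap α))
    (u : Fin n → Fin k → ℝ)
    (hsub : ∀ i (y : Fin k → ℝ),
      φ i ((X i).transpose.mulVec w)
        + ∑ j, (-(u i j)) * (y j - (X i).transpose.mulVec w j) ≤ φ i y)
    (αupd : Fin n → (Fin n → Fin k → ℝ))
    (hαupd : ∀ i, αupd i = Function.update α i (α i + s • (u i - α i)))
    (G : ℝ)
    (hG : G = (1 / n) * ∑ i, (XN i ^ 2 - γ * (1 - s) * lam * n / s) * ND (u i - α i) ^ 2) :
    ((1 / n : ℝ) : EReal) * (∑ i, (D (αupd i) - D α))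
      ≥ ((s / n : ℝ) : EReal) * (((P w : ℝ) : EReal) - D α)
        - (((s / n) ^ 2 * (G / (2 * lam)) : ℝ) : EReal) :=
  key_lemma_expected_dual_improvement_general d k n hn lam γ s hlam hs0 hs1 NP hNP_nonneg
    hNP_eq_zero hNP_smul ND hND ND' hND'_nonneg hND'_smul X XN hXN φ fconj hfconj hsc g gconj Ggrad
    hGsmooth hFenchel P hP vmap hvmap D hD α hαfin w hw u hsub αupd hαupd G hG
end

section
/- Let G, λ > 0, let n be a positive integer, and let (ε_t)_{t≥0} be a sequence of nonnegative reals such that for every t ≥ 1 and every s ∈ [0,1], ε_t ≤ (1 − s/n) ε_{t−1} + (s/n)² G/(2λ). Let t₀ = max(0, ⌈n log(2λn ε₀ / G)⌉). Then for every integer t ≥ t₀, ε_t ≤ 2G / (λ(2n + t − t₀)). -/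
/-! With `C = G / (2λ)` the recursion reads `ε_t ≤ (1 - s/n) ε_{t-1} + (s/n)² C`.
Taking `s = 1` gives `ε_t - C/n ≤ (1 - 1/n)^t (ε_0 - C/n)`, and `(1 - 1/n)^t ≤ exp(-t/n)` makes the
right-hand side at most `C/n` once `t ≥ t₀`, so `ε_{t₀} ≤ 2C/n`. From there, writing
`a = 2n + t - t₀`, the choice `s = 2n/a` propagates `ε_t ≤ 4C/a` to `ε_{t+1} ≤ 4C/(a+1)`. -/

open Real

def SatisfiesRecursion (n : ℕ) (C : ℝ) (ε : ℕ → ℝ) : Prop :=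
  ∀ t, ∀ s ∈ Set.Icc (0 : ℝ) 1, ε (t + 1) ≤ (1 - s / n) * ε t + (s / n) ^ 2 * C

lemma one_sub_pow_mul_le_of_log_le {r x y : ℝ} {T : ℕ} (hr : r ≤ 1) (hy : 0 < y)
    (hT : log (x / y) ≤ r * T) : (1 - r) ^ T * x ≤ y := by
  rcases le_or_gt x 0 with hx | hx
  · nlinarith [pow_nonneg (sub_nonneg.2 hr) T]
  calc (1 - r) ^ T * x ≤ exp (-r) ^ T * x := by
        gcongr
        exact one_sub_le_exp_neg r
    _ = exp (-(r * T)) * x := by rw [← exp_nat_mul]; ring_nf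
    _ ≤ exp (-log (x / y)) * x := by gcongr
    _ = y := by rw [exp_neg, exp_log (div_pos hx hy)]; field_simp

lemma one_sub_two_div_mul_add_sq_mul_le {a C e : ℝ} (ha : 2 ≤ a) (hC : 0 ≤ C)
    (he : e ≤ 4 * C / a) : (1 - 2 / a) * e + (2 / a) ^ 2 * C ≤ 4 * C / (a + 1) := by
  have ha0 : 0 < a := by linarith
  have hq : 0 ≤ 1 - 2 / a := by rw [sub_nonneg, div_le_one ha0]; exact ha
  calc (1 - 2 / a) * e + (2 / a) ^ 2 * C ≤ (1 - 2 / a) * (4 * C / a) + (2 / a) ^ 2 * C := by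
        gcongr
    _ = 4 * C * (a - 1) / a ^ 2 := by field_simp; ring
    _ ≤ 4 * C / (a + 1) := by
        rw [div_le_div_iff₀ (by positivity) (by positivity)]
        nlinarith

namespace SatisfiesRecursion

variable {n : ℕ} {C : ℝ} {ε : ℕ → ℝ}

lemma sub_le_pow_mul (h : SatisfiesRecursion n C ε) (hn : 0 < n) (t : ℕ) :
    ε t - C / n ≤ (1 - 1 / n) ^ t * (ε 0 - C / n) := by
  have hn' : (1 : ℝ) ≤ n := by exact_mod_cast hn
  refine le_geom (u := fun t ↦ ε t - C / n) ?_ t fun k _ ↦ ?_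
  · rw [sub_nonneg, div_le_one (by positivity)]; exact hn'
  · have hstep := h k 1 (by simp)
    have hnoise : (1 / (n : ℝ)) ^ 2 * C = C / n - (1 - 1 / n) * (C / n) := by field_simp; ring
    linarith

lemma le_four_mul_div (h : SatisfiesRecursion n C ε) (hn : 0 < n) (hC : 0 ≤ C) {T : ℕ}
    (hT : ε T ≤ 2 * C / n) : ∀ t, T ≤ t → ε t ≤ 4 * C / (2 * n + t - T) := by
  have hn' : (1 : ℝ) ≤ n := by exact_mod_cast hn
  intro t ht
  induction t, ht using Nat.le_induction with
  | base => convert hT using 1; field_simp; ring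
  | succ t ht ih =>
    set a : ℝ := 2 * n + t - T
    have hTt : (T : ℝ) ≤ t := by exact_mod_cast ht
    have ha : 2 * (n : ℝ) ≤ a := by linarith
    have hs : 2 * n / a ∈ Set.Icc (0 : ℝ) 1 :=
      ⟨div_nonneg (by positivity) (by linarith), (div_le_one (by linarith)).2 ha⟩
    have hsn : 2 * (n : ℝ) / a / n = 2 / a := by field_simp
    have hstep := h t _ hs
    rw [hsn] at hstep
    calc ε (t + 1) ≤ 4 * C / (a + 1) :=
          hstep.trans (one_sub_two_div_mul_add_sq_mul_le (by linarith) hC ih)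
      _ = 4 * C / (2 * n + ↑(t + 1) - T) := by simp only [a]; push_cast; ring_nf

end SatisfiesRecursion

theorem sdca_recursion_lemma_general (G lam : ℝ) (hG : 0 < G) (hlam : 0 < lam)
    (n : ℕ) (hn : 0 < n) (ε : ℕ → ℝ)
    (hrec : ∀ t : ℕ, 1 ≤ t → ∀ s ∈ Set.Icc (0:ℝ) 1,
      ε t ≤ (1 - s / n) * ε (t - 1) + (s / n) ^ 2 * (G / (2 * lam)))
    (t₀ : ℕ) (ht₀ : t₀ = (⌈(n : ℝ) * Real.log (2 * lam * n * ε 0 / G)⌉).toNat) :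
    ∀ t : ℕ, t₀ ≤ t → ε t ≤ 2 * G / (lam * (2 * n + t - t₀)) := by
  obtain ⟨C, hCdef⟩ : ∃ C, C = G / (2 * lam) := ⟨_, rfl⟩
  rw [← hCdef] at hrec
  have hC : 0 < C := by rw [hCdef]; positivity
  have hn' : (0 : ℝ) < n := by exact_mod_cast hn
  have hε : SatisfiesRecursion n C ε := fun t ↦ hrec (t + 1) (by omega)
  have ht₀_log : log (ε 0 / (C / n)) ≤ 1 / n * t₀ := by
    have : ε 0 / (C / n) = 2 * lam * n * ε 0 / G := by rw [hCdef]; field_simp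
    rw [this, ht₀, div_mul_eq_mul_div, one_mul, le_div_iff₀ hn', mul_comm]
    exact (Int.le_ceil _).trans (by exact_mod_cast Int.self_le_toNat _)
  have hdecay := one_sub_pow_mul_le_of_log_le (by bound) (div_pos hC hn') ht₀_log
  have hstart : ε t₀ ≤ 2 * C / n := by
    have hgeom := hε.sub_le_pow_mul hn t₀
    have hpos : 0 ≤ (1 - 1 / n : ℝ) ^ t₀ * (C / n) :=
      mul_nonneg (pow_nonneg (by bound) _) (div_pos hC hn').le
    rw [mul_sub] at hgeom
    linarith [mul_div_assoc 2 C (n : ℝ)]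
  intro t ht
  convert hε.le_four_mul_div hn hC.le hstart t ht using 1
  rw [hCdef]
  field_simp
  ring

/-- deterministic recursion lemma for the dual sub-optimality sequence. -/
theorem sdca_recursion_lemma (G lam : ℝ) (hG : 0 < G) (hlam : 0 < lam)
    (n : ℕ) (hn : 0 < n) (ε : ℕ → ℝ) (hε_nonneg : ∀ t, 0 ≤ ε t)
    (hrec : ∀ t : ℕ, 1 ≤ t → ∀ s ∈ Set.Icc (0:ℝ) 1,
      ε t ≤ (1 - s / n) * ε (t - 1) + (s / n) ^ 2 * (G / (2 * lam)))
    (t₀ : ℕ) (ht₀ : t₀ = (⌈(n : ℝ) * Real.log (2 * lam * n * ε 0 / G)⌉).toNat) :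
    ∀ t : ℕ, t₀ ≤ t → ε t ≤ 2 * G / (lam * (2 * n + t - t₀)) :=
  sdca_recursion_lemma_general G lam hG hlam n hn ε hrec t₀ ht₀
end

section
/- Consider Prox-SDCA with Option I updates, under the same assumptions as in the smooth-loss theorem: each φ_i is (1/γ)-smooth with respect to ‖·‖_P, g is 1-strongly convex with respect to ‖·‖_{P'}, φ_i ≥ 0, (1/n)∑_i φ_i(0) ≤ 1, and ‖X_i‖ ≤ R. Let 0 ≤ T₀ < T. If T₀ ≥ (n + R²/(λγ)) · log( (n + R²/(λγ)) / ((T − T₀) ε_P) ), then the expected average duality gap satisfies E[ (1/(T−T₀)) ∑_{t=T₀+1}^{T} (P(w^{(t−1)}) − D(α^{(t−1)})) ] ≤ ε_P, where the expectation is over the i.i.d. uniformly random indices used by the algorithm. -/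
/-!
Fix a step and write `w = ∇g*(v(α))`, `a = X_iᵀ w`. Option I does at least as well as the
explicit increment `Δ = s (-∇φ_i(a) - α_i)`. Smoothness of `φ_i` makes `φ_i*` `γ`-strongly
convex and strong convexity of `g` makes `g*` `1`-smooth; for `s = n / C` with
`C = n + R²/(λγ)` the two resulting quadratic terms cancel, so the dual value increases by at
least `s/n` times the `i`-th Fenchel–Young gap. Averaging over the uniform index, and using
that the duality gap is the mean of these gaps, the expected dual value grows by at least
`1/C` times the expected duality gap. By weak duality the expected dual suboptimality then
contracts by `1 - 1/C` per step from at most `P(0) - D(0) ≤ 1`, and summing the per-step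
inequality over `T₀ ≤ t < T` bounds the summed expected gap by
`C (1 - 1/C)^T₀ ≤ C e^{-T₀/C} ≤ (T - T₀) ε_P`.
-/

open Finset Matrix Filter Topology

theorem le_of_forall_le_add_mul {a b c : ℝ}
    (h : ∀ ε : ℝ, 0 < ε → ε ≤ 1 → a ≤ b + c * ε) : a ≤ b := by
  have hlim : Tendsto (fun ε => b + c * ε) (𝓝[>] 0) (𝓝 b) := by
    have : Continuous fun ε : ℝ => b + c * ε := by fun_prop
    simpa using (this.tendsto 0).mono_left nhdsWithin_le_nhds
  refine ge_of_tendsto hlim ?_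
  filter_upwards [Ioc_mem_nhdsGT one_pos] with ε ⟨h0, h1⟩ using h ε h0 h1

theorem sum_Icc_add_one_sub_one {M : Type*} [AddCommMonoid M] (f : ℕ → M) (a b : ℕ) :
    ∑ t ∈ Icc (a + 1) b, f (t - 1) = ∑ t ∈ Ico a b, f t := by
  rw [← Ico_add_one_right_eq_Icc, ← sum_Ico_add' (fun t => f (t - 1))]
  simp

namespace EReal

theorem coe_finset_sum_s8 {α : Type*} (s : Finset α) (f : α → ℝ) :
    ((∑ i ∈ s, f i : ℝ) : EReal) = ∑ i ∈ s, (f i : EReal) :=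
  map_sum (⟨⟨Real.toEReal, coe_zero⟩, coe_add⟩ : ℝ →+ EReal) f s

theorem coe_le_neg_sub_coe {x : EReal} {B c r : ℝ} (hx : x ≤ B) (hc : c ≤ -B - r) :
    (c : EReal) ≤ -x - r := by
  induction x using EReal.rec with
  | bot => simp
  | top => exact absurd hx (by simp)
  | coe t =>
    rw [← coe_neg, ← coe_sub, EReal.coe_le_coe_iff]
    linarith [EReal.coe_le_coe_iff.1 hx]

theorem le_neg_toReal_sub_of_coe_le {x : EReal} {c r : ℝ} (hx : x ≠ ⊥)
    (h : (c : EReal) ≤ -x - r) : x ≠ ⊤ ∧ c ≤ -x.toReal - r := by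
  induction x using EReal.rec with
  | bot => exact absurd rfl hx
  | top => simp at h
  | coe t =>
    rw [← coe_neg, ← coe_sub, EReal.coe_le_coe_iff] at h
    exact ⟨coe_ne_top t, by simpa using h⟩

end EReal

section ConvexDuality

variable {ι : Type*} [Fintype ι]

def IsDualNorm (N Nd : (ι → ℝ) → ℝ) : Prop :=
  ∀ z, IsLUB {r : ℝ | ∃ x : ι → ℝ, N x = 1 ∧ r = z ⬝ᵥ x} (Nd z)

def IsSmoothWrt (f : (ι → ℝ) → ℝ) (f' : (ι → ℝ) → ι → ℝ) (N : (ι → ℝ) → ℝ) (γ : ℝ) : Prop :=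
  ∀ a b, f a ≤ f b + f' b ⬝ᵥ (a - b) + 1 / (2 * γ) * N (a - b) ^ 2

def IsStronglyConvexWrt (g : (ι → ℝ) → ℝ) (N : (ι → ℝ) → ℝ) : Prop :=
  ∀ (w₁ w₂ : ι → ℝ) (t : ℝ), 0 ≤ t → t ≤ 1 →
    g (t • w₁ + (1 - t) • w₂) ≤ t * g w₁ + (1 - t) * g w₂ - (t * (1 - t) / 2) * N (w₁ - w₂) ^ 2

def IsConjArgmax (g : (ι → ℝ) → ℝ) (G : (ι → ℝ) → ι → ℝ) : Prop :=
  ∀ v w, w ⬝ᵥ v - g w ≤ G v ⬝ᵥ v - g (G v)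

namespace IsDualNorm

variable {N Nd : (ι → ℝ) → ℝ}

theorem exists_eq_one (hN : IsDualNorm N Nd) : ∃ x, N x = 1 := by
  obtain ⟨-, x, hx, -⟩ := (hN 0).nonempty
  exact ⟨x, hx⟩

theorem dotProduct_le (hN : IsDualNorm N Nd) {z x : ι → ℝ} (hx : N x = 1) : z ⬝ᵥ x ≤ Nd z :=
  (hN z).1 ⟨x, hx, rfl⟩

theorem nonneg (hN : IsDualNorm N Nd) (hsmul : ∀ (c : ℝ) x, N (c • x) = |c| * N x)
    (z : ι → ℝ) : 0 ≤ Nd z := by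
  obtain ⟨x, hx⟩ := hN.exists_eq_one
  have hneg : N (-x) = 1 := by simpa [hx] using hsmul (-1) x
  have h₁ := hN.dotProduct_le (z := z) hx
  have h₂ := hN.dotProduct_le (z := z) hneg
  rw [dotProduct_neg] at h₂
  linarith

theorem smul (hN : IsDualNorm N Nd) {c : ℝ} (hc : 0 < c) (z : ι → ℝ) :
    Nd (c • z) = c * Nd z := by
  refine (hN (c • z)).unique ?_
  have himage : {r : ℝ | ∃ x : ι → ℝ, N x = 1 ∧ r = (c • z) ⬝ᵥ x}
      = OrderIso.mulLeft₀ c hc '' {r | ∃ x : ι → ℝ, N x = 1 ∧ r = z ⬝ᵥ x} := by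
    ext r
    simp [smul_dotProduct, eq_comm]
  rw [himage, ← OrderIso.mulLeft₀_apply c hc, OrderIso.isLUB_image']
  exact hN z

theorem exists_lt_dotProduct (hN : IsDualNorm N Nd) (z : ι → ℝ) {ε : ℝ} (hε : 0 < ε) :
    ∃ x, N x = 1 ∧ Nd z - ε < z ⬝ᵥ x := by
  obtain ⟨-, ⟨x, hx, rfl⟩, hlt⟩ := (lt_isLUB_iff (hN z)).1 (sub_lt_self _ hε)
  exact ⟨x, hx, hlt⟩

theorem dotProduct_le_mul (hN : IsDualNorm N Nd) (hnn : ∀ x, 0 ≤ N x)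
    (hzero : ∀ x, N x = 0 ↔ x = 0) (hsmul : ∀ (c : ℝ) x, N (c • x) = |c| * N x)
    (z x : ι → ℝ) : z ⬝ᵥ x ≤ Nd z * N x := by
  rcases eq_or_ne x 0 with rfl | hx
  · simp [(hzero 0).2 rfl]
  have hpos : 0 < N x := (hnn x).lt_of_ne' (mt (hzero x).1 hx)
  have hunit : N ((N x)⁻¹ • x) = 1 := by
    rw [hsmul, abs_of_pos (inv_pos.2 hpos), inv_mul_cancel₀ hpos.ne']
  have := hN.dotProduct_le (z := z) hunit
  rw [dotProduct_smul, smul_eq_mul, inv_mul_le_iff₀ hpos] at this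
  linarith

end IsDualNorm

noncomputable def fenchelConj (f : (ι → ℝ) → ℝ) (z : ι → ℝ) : EReal :=
  ⨆ x, ((x ⬝ᵥ z - f x : ℝ) : EReal)

section fenchelConj

variable {f : (ι → ℝ) → ℝ} {z : ι → ℝ}

theorem fenchelConj_le_coe_iff {p : ℝ} : fenchelConj f z ≤ p ↔ ∀ x, x ⬝ᵥ z - f x ≤ p := by
  simp only [fenchelConj, iSup_le_iff, EReal.coe_le_coe_iff]

theorem coe_le_fenchelConj (x : ι → ℝ) : ((x ⬝ᵥ z - f x : ℝ) : EReal) ≤ fenchelConj f z :=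
  le_iSup (fun x => ((x ⬝ᵥ z - f x : ℝ) : EReal)) x

theorem fenchelConj_ne_bot : fenchelConj f z ≠ ⊥ :=
  ne_bot_of_le_ne_bot (EReal.coe_ne_bot _) (coe_le_fenchelConj 0)

theorem coe_toReal_fenchelConj (h : fenchelConj f z ≠ ⊤) :
    ((fenchelConj f z).toReal : EReal) = fenchelConj f z :=
  EReal.coe_toReal h fenchelConj_ne_bot

theorem sub_le_toReal_fenchelConj (h : fenchelConj f z ≠ ⊤) (x : ι → ℝ) :
    x ⬝ᵥ z - f x ≤ (fenchelConj f z).toReal := by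
  rw [← EReal.coe_le_coe_iff, coe_toReal_fenchelConj h]
  exact coe_le_fenchelConj x

theorem fenchelConj_zero_le (hf : ∀ x, 0 ≤ f x) : fenchelConj f 0 ≤ (0 : ℝ) :=
  fenchelConj_le_coe_iff.2 fun x => by simpa using hf x

end fenchelConj

section Smooth

variable {f : (ι → ℝ) → ℝ} {f' : (ι → ℝ) → ι → ℝ} {N : (ι → ℝ) → ℝ} {γ : ℝ}

theorem ConvexOn.grad_dotProduct_sub_le (hf : ConvexOn ℝ Set.univ f)
    (hsmul : ∀ (c : ℝ) x, N (c • x) = |c| * N x) (hsmooth : IsSmoothWrt f f' N γ)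
    (a x : ι → ℝ) : f' a ⬝ᵥ (x - a) ≤ f x - f a := by
  set v := x - a
  refine le_of_forall_le_add_mul (c := 1 / (2 * γ) * N v ^ 2) fun t ht ht1 => ?_
  have hchord : f (a + t • v) ≤ (1 - t) * f a + t * f x := by
    have := hf.2 (Set.mem_univ a) (Set.mem_univ x) (sub_nonneg.2 ht1) ht.le (by ring)
    rwa [show (1 - t) • a + t • x = a + t • v by simp only [v]; module] at this
  have hmid : f a ≤ (1 / 2) * f (a + t • v) + (1 / 2) * f (a - t • v) := by
    have := hf.2 (Set.mem_univ (a + t • v)) (Set.mem_univ (a - t • v))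
      (by norm_num : (0 : ℝ) ≤ 1 / 2) (by norm_num : (0 : ℝ) ≤ 1 / 2) (by norm_num)
    rwa [show (1 / 2 : ℝ) • (a + t • v) + (1 / 2 : ℝ) • (a - t • v) = a by module] at this
  have hback : f (a - t • v) ≤ f a - t * (f' a ⬝ᵥ v) + 1 / (2 * γ) * N v ^ 2 * t ^ 2 := by
    have := hsmooth (a - t • v) a
    rw [sub_sub_cancel_left, ← neg_smul, hsmul, abs_neg, abs_of_pos ht, dotProduct_smul,
      smul_eq_mul] at this
    linarith
  have : t * (f' a ⬝ᵥ v) ≤ t * (f x - f a + 1 / (2 * γ) * N v ^ 2 * t) := by linarith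
  linarith [le_of_mul_le_mul_left this ht]

theorem ConvexOn.fenchelConj_grad_le (hf : ConvexOn ℝ Set.univ f)
    (hsmul : ∀ (c : ℝ) x, N (c • x) = |c| * N x) (hsmooth : IsSmoothWrt f f' N γ)
    (a : ι → ℝ) : fenchelConj f (f' a) ≤ ((a ⬝ᵥ f' a - f a : ℝ) : EReal) := by
  refine fenchelConj_le_coe_iff.2 fun x => ?_
  have := hf.grad_dotProduct_sub_le hsmul hsmooth a x
  rw [dotProduct_sub, dotProduct_comm _ x, dotProduct_comm _ a] at this
  linarith

theorem fenchelConj_convexComb_le {Nd : (ι → ℝ) → ℝ} (hN : IsDualNorm N Nd)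
    (hsmul : ∀ (c : ℝ) x, N (c • x) = |c| * N x) (hγ : 0 < γ) (hsmooth : IsSmoothWrt f f' N γ)
    {z₁ z₂ : ι → ℝ} {p₁ p₂ s : ℝ} (h₁ : fenchelConj f z₁ ≤ p₁) (h₂ : fenchelConj f z₂ ≤ p₂)
    (hs0 : 0 ≤ s) (hs1 : s ≤ 1) :
    fenchelConj f ((1 - s) • z₁ + s • z₂)
      ≤ (((1 - s) * p₁ + s * p₂ - γ * s * (1 - s) / 2 * Nd (z₁ - z₂) ^ 2 : ℝ) : EReal) := by
  refine fenchelConj_le_coe_iff.2 fun x => ?_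
  set r := Nd (z₁ - z₂)
  have hr : 0 ≤ r := hN.nonneg hsmul _
  refine le_of_forall_le_add_mul (c := s * (1 - s) * γ * r) fun ε hε _ => ?_
  -- test the two conjugates at points displaced along a near-maximizer of `z₁ - z₂`
  obtain ⟨u, hu, hlt⟩ := hN.exists_lt_dotProduct (z₁ - z₂) hε
  set δ := (γ * r) • u
  have hNδ : ∀ c : ℝ, N (c • δ) = |c| * (γ * r) := fun c => by
    rw [smul_smul, hsmul, hu, abs_mul, abs_of_nonneg (by positivity : 0 ≤ γ * r), mul_one]
  have hδ : γ * r * (r - ε) ≤ δ ⬝ᵥ z₁ - δ ⬝ᵥ z₂ := by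
    rw [← dotProduct_sub, smul_dotProduct, dotProduct_comm, smul_eq_mul]
    exact mul_le_mul_of_nonneg_left hlt.le (by positivity)
  have hc₁ := fenchelConj_le_coe_iff.1 h₁ (x + s • δ)
  have hc₂ := fenchelConj_le_coe_iff.1 h₂ (x - (1 - s) • δ)
  have hs₁ := hsmooth (x + s • δ) x
  have hs₂ := hsmooth (x - (1 - s) • δ) x
  rw [add_sub_cancel_left, hNδ, abs_of_nonneg hs0] at hs₁
  rw [sub_sub_cancel_left, ← neg_smul, hNδ, abs_neg, abs_of_nonneg (sub_nonneg.2 hs1)] at hs₂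
  simp only [add_dotProduct, sub_dotProduct, dotProduct_add, dotProduct_smul, smul_dotProduct,
    smul_eq_mul] at hc₁ hc₂ hs₁ hs₂ ⊢
  have hγ' : γ ≠ 0 := hγ.ne'
  field_simp at hs₁ hs₂
  linarith [mul_le_mul_of_nonneg_left hc₁ (sub_nonneg.2 hs1), mul_le_mul_of_nonneg_left hc₂ hs0,
    mul_le_mul_of_nonneg_left hs₁ (sub_nonneg.2 hs1), mul_le_mul_of_nonneg_left hs₂ hs0,
    mul_le_mul_of_nonneg_left hδ (mul_nonneg hs0 (sub_nonneg.2 hs1))]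

end Smooth

section StronglyConvex

variable {g : (ι → ℝ) → ℝ} {G : (ι → ℝ) → ι → ℝ} {N Nd : (ι → ℝ) → ℝ}

def conjViaArgmax (g : (ι → ℝ) → ℝ) (G : (ι → ℝ) → ι → ℝ) (v : ι → ℝ) : ℝ :=
  G v ⬝ᵥ v - g (G v)

theorem IsStronglyConvexWrt.quadratic_growth (hsc : IsStronglyConvexWrt g N)
    (hG : IsConjArgmax g G) (v w : ι → ℝ) :
    g (G v) + (w - G v) ⬝ᵥ v + 1 / 2 * N (w - G v) ^ 2 ≤ g w := by
  refine le_of_forall_le_add_mul (c := 1 / 2 * N (w - G v) ^ 2) fun t ht ht1 => ?_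
  have hmax := hG v (t • w + (1 - t) • G v)
  have hconv := hsc w (G v) t ht.le ht1
  simp only [add_dotProduct, smul_dotProduct, sub_dotProduct, smul_eq_mul] at hmax ⊢
  have : t * (g (G v) + (w ⬝ᵥ v - G v ⬝ᵥ v) + 1 / 2 * N (w - G v) ^ 2)
      ≤ t * (g w + 1 / 2 * N (w - G v) ^ 2 * t) := by linarith
  linarith [le_of_mul_le_mul_left this ht]

theorem conjViaArgmax_add_le (hN : IsDualNorm N Nd) (hnn : ∀ x, 0 ≤ N x)
    (hzero : ∀ x, N x = 0 ↔ x = 0) (hsmul : ∀ (c : ℝ) x, N (c • x) = |c| * N x)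
    (hsc : IsStronglyConvexWrt g N) (hG : IsConjArgmax g G) (v δ : ι → ℝ) :
    conjViaArgmax g G (v + δ) ≤ conjViaArgmax g G v + G v ⬝ᵥ δ + 1 / 2 * Nd δ ^ 2 := by
  set e := G (v + δ) - G v
  have hgrowth := hsc.quadratic_growth hG v (G (v + δ))
  have hpair : e ⬝ᵥ δ ≤ Nd δ * N e := by
    rw [dotProduct_comm]; exact hN.dotProduct_le_mul hnn hzero hsmul δ e
  have hsplit : G (v + δ) ⬝ᵥ (v + δ) = G (v + δ) ⬝ᵥ v + G v ⬝ᵥ δ + e ⬝ᵥ δ := by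
    simp only [e, dotProduct_add, sub_dotProduct]; ring
  simp only [conjViaArgmax, hsplit]
  simp only [sub_dotProduct] at hgrowth
  nlinarith [sq_nonneg (Nd δ - N e)]

end StronglyConvex

end ConvexDuality

section SDCA

variable {ι ι' : Type*} [Fintype ι] {n : ℕ}

noncomputable def dualAverage (lam : ℝ) (X : Fin n → Matrix ι' ι ℝ) (β : Fin n → ι → ℝ) :
    ι' → ℝ :=
  (1 / (lam * n)) • ∑ i, X i *ᵥ β i

theorem dualAverage_update {lam : ℝ} {X : Fin n → Matrix ι' ι ℝ} (α : Fin n → ι → ℝ)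
    (i : Fin n) (Δ : ι → ℝ) :
    dualAverage lam X (Function.update α i (α i + Δ))
      = dualAverage lam X α + (1 / (lam * n)) • X i *ᵥ Δ := by
  have hcol : ∀ j, X j *ᵥ Function.update α i (α i + Δ) j
      = X j *ᵥ α j + (Pi.single i (X i *ᵥ Δ) : Fin n → ι' → ℝ) j := by
    intro j
    rcases eq_or_ne j i with rfl | hj
    · simp [mulVec_add]
    · simp [hj]
  simp only [dualAverage, hcol, sum_add_distrib, sum_pi_single', mem_univ, if_true, smul_add]

variable [Fintype ι']
  (φ : Fin n → (ι → ℝ) → ℝ) (g : (ι' → ℝ) → ℝ) (G : (ι' → ℝ) → ι' → ℝ) (lam : ℝ)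
  (X : Fin n → Matrix ι' ι ℝ)

noncomputable def primalObj (w : ι' → ℝ) : ℝ :=
  1 / n * ∑ i, φ i ((X i)ᵀ *ᵥ w) + lam * g w

def DualFeasible (β : Fin n → ι → ℝ) : Prop :=
  ∀ i, fenchelConj (φ i) (-β i) ≠ ⊤

-- `toReal` sends `⊤` to `0`, so this is the dual objective only at `DualFeasible` points
noncomputable def realDual (β : Fin n → ι → ℝ) : ℝ :=
  1 / n * ∑ i, -(fenchelConj (φ i) (-β i)).toReal
    - lam * conjViaArgmax g G (dualAverage lam X β)

noncomputable def fenchelYoungGap (w : ι' → ℝ) (β : Fin n → ι → ℝ) (i : Fin n) : ℝ :=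
  (fenchelConj (φ i) (-β i)).toReal + φ i ((X i)ᵀ *ᵥ w) + (X i)ᵀ *ᵥ w ⬝ᵥ β i

noncomputable def proxObj (Nd' : (ι' → ℝ) → ℝ) (α : Fin n → ι → ℝ) (i : Fin n) (Δ : ι → ℝ) :
    EReal :=
  -fenchelConj (φ i) (-(α i + Δ))
    - ((G (dualAverage lam X α) ⬝ᵥ X i *ᵥ Δ + 1 / (2 * lam * n) * Nd' (X i *ᵥ Δ) ^ 2 : ℝ)
        : EReal)

variable {φ g G lam X}

theorem DualFeasible.zero (hφ : ∀ i x, 0 ≤ φ i x) : DualFeasible φ (0 : Fin n → ι → ℝ) :=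
  fun i => by simpa using ne_top_of_le_ne_top (EReal.coe_ne_top 0) (fenchelConj_zero_le (hφ i))

theorem coe_realDual {β : Fin n → ι → ℝ} (hβ : DualFeasible φ β) :
    ((realDual φ g G lam X β : ℝ) : EReal)
      = ((1 / n : ℝ) : EReal) * ∑ i, -fenchelConj (φ i) (-β i)
        - ((lam * conjViaArgmax g G (dualAverage lam X β) : ℝ) : EReal) := by
  simp only [realDual, EReal.coe_sub, EReal.coe_mul, EReal.coe_finset_sum_s8, EReal.coe_neg,
    coe_toReal_fenchelConj (hβ _)]

theorem mul_dotProduct_dualAverage (hlam : lam ≠ 0) (w : ι' → ℝ) (β : Fin n → ι → ℝ) :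
    lam * (w ⬝ᵥ dualAverage lam X β) = 1 / n * ∑ i, (X i)ᵀ *ᵥ w ⬝ᵥ β i := by
  simp only [dualAverage, dotProduct_smul, dotProduct_sum, dotProduct_mulVec, mulVec_transpose,
    smul_eq_mul]
  field_simp

theorem primalObj_sub_realDual (hlam : lam ≠ 0) (β : Fin n → ι → ℝ) :
    primalObj φ g lam X (G (dualAverage lam X β)) - realDual φ g G lam X β
      = 1 / n * ∑ i, fenchelYoungGap φ X (G (dualAverage lam X β)) β i := by
  have := mul_dotProduct_dualAverage (X := X) hlam (G (dualAverage lam X β)) β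
  simp only [primalObj, realDual, fenchelYoungGap, conjViaArgmax, sum_add_distrib,
    sum_neg_distrib]
  linear_combination this

theorem realDual_le_primalObj (hlam : 0 < lam) (hG : IsConjArgmax g G) {β : Fin n → ι → ℝ}
    (hβ : DualFeasible φ β) (w : ι' → ℝ) : realDual φ g G lam X β ≤ primalObj φ g lam X w := by
  have hFY : ∀ i,
      -(fenchelConj (φ i) (-β i)).toReal ≤ φ i ((X i)ᵀ *ᵥ w) + (X i)ᵀ *ᵥ w ⬝ᵥ β i := fun i => by
    have := sub_le_toReal_fenchelConj (hβ i) ((X i)ᵀ *ᵥ w)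
    rw [dotProduct_neg] at this
    linarith
  have hsum := mul_le_mul_of_nonneg_left (sum_le_sum (s := univ) fun i _ => hFY i)
    (by positivity : (0 : ℝ) ≤ 1 / n)
  have hg := mul_le_mul_of_nonneg_left (hG (dualAverage lam X β) w) hlam.le
  have := mul_dotProduct_dualAverage (X := X) hlam.ne' w β
  simp only [primalObj, realDual, conjViaArgmax, sum_add_distrib] at hsum ⊢
  linarith

theorem realDual_zero_nonneg (hlam : 0 ≤ lam) (hφ : ∀ i x, 0 ≤ φ i x) (hg : ∀ w, 0 ≤ g w) :
    0 ≤ realDual φ g G lam X 0 := by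
  have hconj : ∀ i, (fenchelConj (φ i) 0).toReal ≤ 0 :=
    fun i => EReal.toReal_nonpos (fenchelConj_zero_le (hφ i))
  have hv : dualAverage lam X 0 = 0 := by simp [dualAverage]
  simp only [realDual, hv, conjViaArgmax, dotProduct_zero, Pi.zero_apply, neg_zero]
  have h₁ := mul_nonneg (by positivity : (0 : ℝ) ≤ 1 / n)
    (sum_nonneg fun i (_ : i ∈ univ) => neg_nonneg.2 (hconj i))
  have h₂ := mul_nonneg hlam (hg (G 0))
  linarith

theorem realDual_update_ge {N' Nd' : (ι' → ℝ) → ℝ} (hN' : IsDualNorm N' Nd')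
    (hnn : ∀ x, 0 ≤ N' x) (hzero : ∀ x, N' x = 0 ↔ x = 0)
    (hsmul : ∀ (c : ℝ) x, N' (c • x) = |c| * N' x) (hsc : IsStronglyConvexWrt g N')
    (hG : IsConjArgmax g G) (hlam : 0 < lam) (α : Fin n → ι → ℝ) (i : Fin n) (Δ : ι → ℝ) :
    realDual φ g G lam X α + 1 / n * ((fenchelConj (φ i) (-α i)).toReal
        - (fenchelConj (φ i) (-(α i + Δ))).toReal
        - (G (dualAverage lam X α) ⬝ᵥ X i *ᵥ Δ + 1 / (2 * lam * n) * Nd' (X i *ᵥ Δ) ^ 2))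
      ≤ realDual φ g G lam X (Function.update α i (α i + Δ)) := by
  have hn : (0 : ℝ) < n := Nat.cast_pos.2 i.pos
  set α' := Function.update α i (α i + Δ)
  set F := fun (β : Fin n → ι → ℝ) j => -(fenchelConj (φ j) (-β j)).toReal
  have hrest : ∑ j ∈ univ.erase i, F α' j = ∑ j ∈ univ.erase i, F α j :=
    sum_congr rfl fun j hj => by simp only [F, α', Function.update_of_ne (ne_of_mem_erase hj)]
  have hsum : ∑ j, F α' j = ∑ j, F α j - F α i + F α' i := by
    rw [← add_sum_erase _ _ (mem_univ i), ← add_sum_erase _ (F α) (mem_univ i), hrest]; ring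
  have hconj := conjViaArgmax_add_le hN' hnn hzero hsmul hsc hG (dualAverage lam X α)
    ((1 / (lam * n)) • X i *ᵥ Δ)
  rw [← dualAverage_update, hN'.smul (by positivity), dotProduct_smul, smul_eq_mul] at hconj
  have hconj' := mul_le_mul_of_nonneg_left hconj hlam.le
  simp only [realDual]
  change 1 / n * ∑ j, F α j - _ + _ ≤ 1 / n * ∑ j, F α' j - _
  rw [hsum]
  simp only [F, α', Function.update_self] at hconj' ⊢
  field_simp at hconj' ⊢
  linarith

theorem proxObj_candidate_ge {N Nd : (ι → ℝ) → ℝ} {N' Nd' : (ι' → ℝ) → ℝ}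
    {φ' : Fin n → (ι → ℝ) → ι → ℝ} {γ R s : ℝ}
    (hN : IsDualNorm N Nd) (hsmul : ∀ (c : ℝ) x, N (c • x) = |c| * N x)
    (hN' : IsDualNorm N' Nd') (hsmul' : ∀ (c : ℝ) x, N' (c • x) = |c| * N' x)
    (hX : ∀ i z, Nd' (X i *ᵥ z) ≤ R * Nd z) (hφ : ∀ i, ConvexOn ℝ Set.univ (φ i)) (hγ : 0 < γ)
    (hsmooth : ∀ i, IsSmoothWrt (φ i) (φ' i) N γ)
    (hlam : 0 < lam) (hs0 : 0 < s) (hs1 : s ≤ 1) (hsR : s * R ^ 2 ≤ lam * n * γ * (1 - s))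
    {α : Fin n → ι → ℝ} {i : Fin n} (hα : fenchelConj (φ i) (-α i) ≠ ⊤) :
    ((s * fenchelYoungGap φ X (G (dualAverage lam X α)) α i
        - (fenchelConj (φ i) (-α i)).toReal : ℝ) : EReal)
      ≤ proxObj φ G lam X Nd' α i (s • (-φ' i ((X i)ᵀ *ᵥ G (dualAverage lam X α)) - α i)) := by
  have hn : (0 : ℝ) < n := Nat.cast_pos.2 i.pos
  set w := G (dualAverage lam X α)
  set a := (X i)ᵀ *ᵥ w
  set q := -φ' i a - α i
  have hconj := fenchelConj_convexComb_le hN hsmul hγ (hsmooth i) (EReal.le_coe_toReal hα)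
    ((hφ i).fenchelConj_grad_le hsmul (hsmooth i) a) hs0.le hs1
  rw [show (1 - s) • -α i + s • φ' i a = -(α i + s • q) by simp only [q]; module,
    show -α i - φ' i a = q by simp only [q]; abel] at hconj
  refine EReal.coe_le_neg_sub_coe hconj ?_
  have hdot : w ⬝ᵥ X i *ᵥ (s • q) = s * (-(a ⬝ᵥ φ' i a) - a ⬝ᵥ α i) := by
    rw [dotProduct_mulVec, ← mulVec_transpose, dotProduct_smul, dotProduct_sub, dotProduct_neg,
      smul_eq_mul]
  -- the choice of `s` lets the strong convexity of `φ_i*` absorb the proximal term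
  have hquad :
      1 / (2 * lam * n) * Nd' (X i *ᵥ (s • q)) ^ 2 ≤ γ * s * (1 - s) / 2 * Nd q ^ 2 := by
    have hbound : Nd' (X i *ᵥ (s • q)) ≤ s * (R * Nd q) := by
      rw [mulVec_smul, hN'.smul hs0]; exact mul_le_mul_of_nonneg_left (hX i q) hs0.le
    calc 1 / (2 * lam * n) * Nd' (X i *ᵥ (s • q)) ^ 2
        ≤ 1 / (2 * lam * n) * (s * (R * Nd q)) ^ 2 := by
          gcongr; exact hN'.nonneg hsmul' _
      _ = s / (2 * lam * n) * (s * R ^ 2) * Nd q ^ 2 := by ring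
      _ ≤ s / (2 * lam * n) * (lam * n * γ * (1 - s)) * Nd q ^ 2 := by gcongr
      _ = γ * s * (1 - s) / 2 * Nd q ^ 2 := by field_simp
  simp only [fenchelYoungGap]
  linarith

theorem realDual_step {N Nd : (ι → ℝ) → ℝ} {N' Nd' : (ι' → ℝ) → ℝ}
    {φ' : Fin n → (ι → ℝ) → ι → ℝ} {γ R s : ℝ}
    (hN : IsDualNorm N Nd) (hsmul : ∀ (c : ℝ) x, N (c • x) = |c| * N x)
    (hN' : IsDualNorm N' Nd') (hnn' : ∀ x, 0 ≤ N' x) (hzero' : ∀ x, N' x = 0 ↔ x = 0)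
    (hsmul' : ∀ (c : ℝ) x, N' (c • x) = |c| * N' x)
    (hX : ∀ i z, Nd' (X i *ᵥ z) ≤ R * Nd z) (hφ : ∀ i, ConvexOn ℝ Set.univ (φ i)) (hγ : 0 < γ)
    (hsmooth : ∀ i, IsSmoothWrt (φ i) (φ' i) N γ) (hsc : IsStronglyConvexWrt g N')
    (hG : IsConjArgmax g G)
    (hlam : 0 < lam) (hs0 : 0 < s) (hs1 : s ≤ 1) (hsR : s * R ^ 2 ≤ lam * n * γ * (1 - s))
    {α : Fin n → ι → ℝ} (hα : DualFeasible φ α) {i : Fin n} {Δ : ι → ℝ}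
    (hΔ : ∀ Δ', proxObj φ G lam X Nd' α i Δ' ≤ proxObj φ G lam X Nd' α i Δ) :
    DualFeasible φ (Function.update α i (α i + Δ)) ∧
      realDual φ g G lam X α + s / n * fenchelYoungGap φ X (G (dualAverage lam X α)) α i
        ≤ realDual φ g G lam X (Function.update α i (α i + Δ)) := by
  have hcand := (proxObj_candidate_ge hN hsmul hN' hsmul' hX hφ hγ hsmooth hlam hs0 hs1 hsR
    (hα i)).trans (hΔ _)
  obtain ⟨hfin, hle⟩ := EReal.le_neg_toReal_sub_of_coe_le fenchelConj_ne_bot hcand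
  refine ⟨fun j => ?_, ?_⟩
  · rcases eq_or_ne j i with rfl | hj
    · simpa using hfin
    · simpa [Function.update_of_ne hj] using hα j
  · have hup := realDual_update_ge (φ := φ) (X := X) hN' hnn' hzero' hsmul' hsc hG hlam α i Δ
    have := mul_le_mul_of_nonneg_left hle (by positivity : (0 : ℝ) ≤ 1 / n)
    rw [div_eq_mul_one_div s, mul_comm s, mul_assoc]
    linarith

theorem sdca_iterate_ascent {N Nd : (ι → ℝ) → ℝ} {N' Nd' : (ι' → ℝ) → ℝ}
    {φ' : Fin n → (ι → ℝ) → ι → ℝ} {γ R s : ℝ}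
    (hN : IsDualNorm N Nd) (hsmul : ∀ (c : ℝ) x, N (c • x) = |c| * N x)
    (hN' : IsDualNorm N' Nd') (hnn' : ∀ x, 0 ≤ N' x) (hzero' : ∀ x, N' x = 0 ↔ x = 0)
    (hsmul' : ∀ (c : ℝ) x, N' (c • x) = |c| * N' x)
    (hX : ∀ i z, Nd' (X i *ᵥ z) ≤ R * Nd z) (hφ : ∀ i, ConvexOn ℝ Set.univ (φ i)) (hγ : 0 < γ)
    (hsmooth : ∀ i, IsSmoothWrt (φ i) (φ' i) N γ) (hsc : IsStronglyConvexWrt g N')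
    (hG : IsConjArgmax g G)
    (hlam : 0 < lam) (hs0 : 0 < s) (hs1 : s ≤ 1) (hsR : s * R ^ 2 ≤ lam * n * γ * (1 - s))
    (hφ0 : ∀ i x, 0 ≤ φ i x) {α : (ℕ → Fin n) → ℕ → Fin n → ι → ℝ} (hinit : ∀ ω, α ω 0 = 0)
    (hupdate : ∀ ω t, ∃ Δ, α ω (t + 1) = Function.update (α ω t) (ω t) (α ω t (ω t) + Δ) ∧
      ∀ Δ', proxObj φ G lam X Nd' (α ω t) (ω t) Δ' ≤ proxObj φ G lam X Nd' (α ω t) (ω t) Δ)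
    (ω : ℕ → Fin n) (t : ℕ) :
    DualFeasible φ (α ω t) ∧
      realDual φ g G lam X (α ω t)
          + s / n * fenchelYoungGap φ X (G (dualAverage lam X (α ω t))) (α ω t) (ω t)
        ≤ realDual φ g G lam X (α ω (t + 1)) := by
  have hstep : ∀ t, DualFeasible φ (α ω t) → DualFeasible φ (α ω (t + 1)) ∧
      realDual φ g G lam X (α ω t)
          + s / n * fenchelYoungGap φ X (G (dualAverage lam X (α ω t))) (α ω t) (ω t)
        ≤ realDual φ g G lam X (α ω (t + 1)) := fun t hfeas => by
    obtain ⟨Δ, heq, hmax⟩ := hupdate ω t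
    rw [heq]
    exact realDual_step hN hsmul hN' hnn' hzero' hsmul' hX hφ hγ hsmooth hsc hG hlam hs0 hs1 hsR
      hfeas hmax
  have hfeas : ∀ t, DualFeasible φ (α ω t) := fun t => by
    induction t with
    | zero => rw [hinit]; exact DualFeasible.zero hφ0
    | succ t ih => exact (hstep t ih).1
  exact ⟨hfeas t, (hstep t (hfeas t)).2⟩

end SDCA

section RandomIndices

def padSeq {n T : ℕ} (σ : Fin T → Fin n) (i₀ : Fin n) : ℕ → Fin n :=
  fun s => if h : s < T then σ ⟨s, h⟩ else i₀

theorem Fintype.sum_sum_update {ι κ M : Type*} [Fintype ι] [Fintype κ] [DecidableEq ι]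
    [AddCommMonoid M] (i : ι) (F : (ι → κ) → M) :
    ∑ σ : ι → κ, ∑ j : κ, F (Function.update σ i j) = Fintype.card κ • ∑ σ, F σ := by
  -- `(σ, j) ↦ (update σ i j, σ i)` is an involution of `(ι → κ) × κ`
  have hinv : Function.Involutive fun p : (ι → κ) × κ => (Function.update p.1 i p.2, p.1 i) :=
    fun p => by simp
  rw [← Fintype.sum_prod_type', Fintype.sum_bijective _ hinv.bijective _ (fun p => F p.1)
    fun p => rfl, Fintype.sum_prod_type, sum_comm]
  simp [sum_const, smul_sum]

theorem sum_padSeq_step_le {α : Type*} {n T : ℕ} (i₀ : Fin n) (Y : (ℕ → Fin n) → ℕ → α)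
    (hadapt : ∀ ω ω' t, (∀ s < t, ω s = ω' s) → Y ω t = Y ω' t) (V : α → ℝ) (h : α → Fin n → ℝ)
    (hstep : ∀ ω t, V (Y ω t) + h (Y ω t) (ω t) ≤ V (Y ω (t + 1))) {t : ℕ} (ht : t < T) :
    ∑ σ : Fin T → Fin n, (V (Y (padSeq σ i₀) t) + 1 / n * ∑ j, h (Y (padSeq σ i₀) t) j)
      ≤ ∑ σ : Fin T → Fin n, V (Y (padSeq σ i₀) (t + 1)) := by
  have hn : (0 : ℝ) < n := Nat.cast_pos.2 i₀.pos
  have hfresh : ∀ σ j, V (Y (padSeq σ i₀) t) + h (Y (padSeq σ i₀) t) j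
      ≤ V (Y (padSeq (Function.update σ ⟨t, ht⟩ j) i₀) (t + 1)) := fun σ j => by
    have hpast : Y (padSeq (Function.update σ ⟨t, ht⟩ j) i₀) t = Y (padSeq σ i₀) t :=
      hadapt _ _ t fun s hs => by
        simp [padSeq, hs.trans ht, Function.update_of_ne
          (show (⟨s, hs.trans ht⟩ : Fin T) ≠ ⟨t, ht⟩ from Fin.ne_of_val_ne hs.ne)]
    have hnow : padSeq (Function.update σ ⟨t, ht⟩ j) i₀ t = j := by simp [padSeq, ht]
    simpa only [hpast, hnow] using hstep (padSeq (Function.update σ ⟨t, ht⟩ j) i₀) t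
  have hsum := sum_le_sum fun σ (_ : σ ∈ univ) => sum_le_sum fun j (_ : j ∈ univ) => hfresh σ j
  have hcount := Fintype.sum_sum_update ⟨t, ht⟩ fun σ : Fin T → Fin n =>
    V (Y (padSeq σ i₀) (t + 1))
  rw [Fintype.card_fin, nsmul_eq_mul] at hcount
  have hlhs : ∑ σ : Fin T → Fin n, (V (Y (padSeq σ i₀) t) + 1 / n * ∑ j, h (Y (padSeq σ i₀) t) j)
      = 1 / n * ∑ σ : Fin T → Fin n, ∑ j, (V (Y (padSeq σ i₀) t) + h (Y (padSeq σ i₀) t) j) := by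
    rw [mul_sum]
    refine sum_congr rfl fun σ _ => ?_
    rw [sum_add_distrib, sum_const, card_univ, Fintype.card_fin, nsmul_eq_mul]
    field_simp
  rw [hlhs]
  calc 1 / n * ∑ σ : Fin T → Fin n, ∑ j, (V (Y (padSeq σ i₀) t) + h (Y (padSeq σ i₀) t) j)
      ≤ 1 / n * (n * ∑ σ : Fin T → Fin n, V (Y (padSeq σ i₀) (t + 1))) := by
        rw [← hcount]; gcongr
    _ = ∑ σ : Fin T → Fin n, V (Y (padSeq σ i₀) (t + 1)) := by field_simp

theorem sum_Ico_le_of_ascent {a gap : ℕ → ℝ} {b B q : ℝ} {T₀ T : ℕ} (hq0 : 0 ≤ q) (hq1 : q ≤ 1)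
    (hstep : ∀ t < T, a t + q * gap t ≤ a (t + 1)) (hgap : ∀ t, b - a t ≤ gap t)
    (h0 : b - a 0 ≤ B) (hT : a T ≤ b) (hT₀ : T₀ ≤ T) :
    q * ∑ t ∈ Ico T₀ T, gap t ≤ (1 - q) ^ T₀ * B := by
  have hcontract : ∀ m ≤ T, b - a m ≤ (1 - q) ^ m * B := by
    intro m hm
    induction m with
    | zero => simpa using h0
    | succ m ih =>
      have := hstep m hm
      have := mul_le_mul_of_nonneg_left (hgap m) hq0
      calc b - a (m + 1) ≤ (1 - q) * (b - a m) := by linarith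
        _ ≤ (1 - q) * ((1 - q) ^ m * B) :=
          mul_le_mul_of_nonneg_left (ih (by omega)) (sub_nonneg.2 hq1)
        _ = (1 - q) ^ (m + 1) * B := by ring
  calc q * ∑ t ∈ Ico T₀ T, gap t ≤ ∑ t ∈ Ico T₀ T, (a (t + 1) - a t) := by
        rw [mul_sum]
        exact sum_le_sum fun t ht => by linarith [hstep t (mem_Ico.1 ht).2]
    _ = a T - a T₀ := sum_Ico_sub a hT₀
    _ ≤ (1 - q) ^ T₀ * B := by linarith [hcontract T₀ hT₀]

theorem coordinateAscent_expected_gap_le {α : Type*} {n T T₀ : ℕ} (i₀ : Fin n)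
    (Y : (ℕ → Fin n) → ℕ → α) (hadapt : ∀ ω ω' t, (∀ s < t, ω s = ω' s) → Y ω t = Y ω' t)
    (V Pv : α → ℝ) (h : α → Fin n → ℝ) {q : ℝ} (hq0 : 0 ≤ q) (hq1 : q ≤ 1)
    (hstep : ∀ ω t, V (Y ω t) + h (Y ω t) (ω t) ≤ V (Y ω (t + 1)))
    (hmean : ∀ x, 1 / n * ∑ j, h x j = q * (Pv x - V x))
    (hweak : ∀ ω t ω' t', V (Y ω' t') ≤ Pv (Y ω t))
    (hV0 : ∀ ω, 0 ≤ V (Y ω 0)) (hV1 : ∀ ω t, V (Y ω t) ≤ 1) (hT₀ : T₀ ≤ T) :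
    q * (1 / n ^ T * ∑ σ : Fin T → Fin n, ∑ t ∈ Icc (T₀ + 1) T,
        (Pv (Y (padSeq σ i₀) (t - 1)) - V (Y (padSeq σ i₀) (t - 1)))) ≤ (1 - q) ^ T₀ := by
  have : Nonempty (Fin n) := ⟨i₀⟩
  -- `b` stands in for the optimal dual value, which need not be attained
  set b := ⨆ p : (ℕ → Fin n) × ℕ, V (Y p.1 p.2)
  have hbdd : BddAbove (Set.range fun p : (ℕ → Fin n) × ℕ => V (Y p.1 p.2)) :=
    ⟨1, by rintro _ ⟨p, rfl⟩; exact hV1 _ _⟩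
  have hVb : ∀ ω t, V (Y ω t) ≤ b := fun ω t => le_ciSup hbdd (ω, t)
  have hbP : ∀ ω t, b ≤ Pv (Y ω t) := fun ω t => ciSup_le fun p => hweak ω t p.1 p.2
  have hN : (0 : ℝ) < n ^ T := pow_pos (Nat.cast_pos.2 i₀.pos) T
  have hcard : ∑ _σ : Fin T → Fin n, (1 : ℝ) = n ^ T := by simp
  set a := fun t => ∑ σ : Fin T → Fin n, V (Y (padSeq σ i₀) t)
  set gap := fun t => ∑ σ : Fin T → Fin n, (Pv (Y (padSeq σ i₀) t) - V (Y (padSeq σ i₀) t))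
  have hb : ∀ t, n ^ T * b - a t = ∑ σ : Fin T → Fin n, (b - V (Y (padSeq σ i₀) t)) := fun t => by
    simp only [a, sum_sub_distrib, ← hcard, sum_mul, one_mul]
  have hasc := sum_Ico_le_of_ascent (a := a) (gap := gap) (b := n ^ T * b) (B := n ^ T) hq0 hq1
    (fun t ht => by
      have := sum_padSeq_step_le i₀ Y hadapt V h hstep ht
      simpa only [hmean, sum_add_distrib, ← mul_sum] using this)
    (fun t => by rw [hb]; exact sum_le_sum fun σ _ => by linarith [hbP (padSeq σ i₀) t])
    (by
      rw [hb, ← hcard]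
      exact sum_le_sum fun σ _ => by linarith [hV0 (padSeq σ i₀), hVb (padSeq σ i₀) 0,
        (ciSup_le fun p => hV1 p.1 p.2 : b ≤ 1)])
    (by rw [← sub_nonneg, hb]; exact sum_nonneg fun σ _ => by linarith [hVb (padSeq σ i₀) T]) hT₀
  have hshift : ∀ σ : Fin T → Fin n, ∑ t ∈ Icc (T₀ + 1) T,
      (Pv (Y (padSeq σ i₀) (t - 1)) - V (Y (padSeq σ i₀) (t - 1)))
        = ∑ t ∈ Ico T₀ T, (Pv (Y (padSeq σ i₀) t) - V (Y (padSeq σ i₀) t)) := fun σ =>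
    sum_Icc_add_one_sub_one (fun t => Pv (Y (padSeq σ i₀) t) - V (Y (padSeq σ i₀) t)) T₀ T
  rw [sum_congr rfl fun σ _ => hshift σ, sum_comm, ← mul_assoc, mul_comm q, mul_assoc,
    div_mul_eq_mul_div, one_mul, div_le_iff₀ hN]
  exact hasc

end RandomIndices

theorem one_div_sub_mul_le_of_log_le {C ε A : ℝ} {T₀ T : ℕ} (hC : 1 ≤ C) (hε : 0 < ε)
    (hT : T₀ < T) (hA : 1 / C * A ≤ (1 - 1 / C) ^ T₀)
    (hlog : C * Real.log (C / ((T - T₀) * ε)) ≤ T₀) :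
    1 / (T - T₀) * A ≤ ε := by
  have hC0 : 0 < C := one_pos.trans_le hC
  have hm : (0 : ℝ) < T - T₀ := sub_pos.2 (Nat.cast_lt.2 hT)
  have hexp : (1 - 1 / C) ^ T₀ ≤ (T - T₀) * ε / C := by
    calc (1 - 1 / C) ^ T₀ ≤ Real.exp (-(1 / C)) ^ T₀ := by
          gcongr
          · exact sub_nonneg.2 ((div_le_one hC0).2 hC)
          · exact Real.one_sub_le_exp_neg _
      _ = Real.exp (-(T₀ / C)) := by rw [← Real.exp_nat_mul]; ring_nf
      _ ≤ Real.exp (-Real.log (C / ((T - T₀) * ε))) := by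
          gcongr; rwa [le_div_iff₀ hC0, mul_comm]
      _ = (T - T₀) * ε / C := by
          rw [Real.exp_neg, Real.exp_log (by positivity), inv_div]
  have : A ≤ (T - T₀) * ε := by
    have := hA.trans hexp
    rwa [div_mul_eq_mul_div, one_mul, div_le_div_iff_of_pos_right hC0] at this
  rw [div_mul_eq_mul_div, one_mul, div_le_iff₀ hm]
  linarith

theorem prox_sdca_smooth_average_duality_gap_general (d k n : ℕ) (hn : 0 < n)
    (lam γ R εP : ℝ) (hlam : 0 < lam) (hγ : 0 < γ) (hεP : 0 < εP)
    -- ‖·‖_P, a norm on ℝ^k, and its dual norm ‖·‖_D: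
    (NP : (Fin k → ℝ) → ℝ)
    (hNP_smul : ∀ (c : ℝ) (x : Fin k → ℝ), NP (c • x) = |c| * NP x)
    (ND : (Fin k → ℝ) → ℝ)
    (hND : ∀ z, IsLUB {r : ℝ | ∃ x : Fin k → ℝ, NP x = 1 ∧ r = ∑ j, z j * x j} (ND z))
    -- ‖·‖_{P'}, a norm on ℝ^d, and its dual norm ‖·‖_{D'}:
    (NP' : (Fin d → ℝ) → ℝ)
    (hNP'_nonneg : ∀ x, 0 ≤ NP' x)
    (hNP'_eq_zero : ∀ x, NP' x = 0 ↔ x = 0)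
    (hNP'_smul : ∀ (c : ℝ) (x : Fin d → ℝ), NP' (c • x) = |c| * NP' x)
    (ND' : (Fin d → ℝ) → ℝ)
    (hND' : ∀ z, IsLUB {r : ℝ | ∃ x : Fin d → ℝ, NP' x = 1 ∧ r = ∑ j, z j * x j} (ND' z))
    -- data matrices, with operator norms bounded by R:
    (X : Fin n → Matrix (Fin d) (Fin k) ℝ)
    (hXR : ∀ i (z : Fin k → ℝ), ND' ((X i).mulVec z) ≤ R * ND z)
    -- the losses: convex, nonnegative, (1/γ)-smooth w.r.t. ‖·‖_P, small at 0:
    (φ : Fin n → (Fin k → ℝ) → ℝ) (hφconv : ∀ i, ConvexOn ℝ Set.univ (φ i))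
    (φgrad : Fin n → (Fin k → ℝ) → (Fin k → ℝ))
    (hφsmooth : ∀ i a b, φ i a ≤ φ i b + (∑ j, φgrad i b j * (a j - b j))
        + (1 / (2 * γ)) * NP (a - b) ^ 2)
    (hφnonneg : ∀ i a, 0 ≤ φ i a)
    (hφzero : (1 / n) * ∑ i, φ i 0 ≤ 1)
    -- the regularizer: convex, 1-strongly convex w.r.t. ‖·‖_{P'}, normalized:
    (g : (Fin d → ℝ) → ℝ)
    (hgsc : ∀ (w₁ w₂ : Fin d → ℝ) (t : ℝ), 0 ≤ t → t ≤ 1 →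
      g (t • w₁ + (1 - t) • w₂) ≤ t * g w₁ + (1 - t) * g w₂
        - (t * (1 - t) / 2) * NP' (w₁ - w₂) ^ 2)
    (hgzero : g 0 = 0) (hgnonneg : ∀ w, 0 ≤ g w)
    -- conjugates of the losses:
    (fconj : Fin n → (Fin k → ℝ) → EReal)
    (hfconj : ∀ i z, fconj i z = ⨆ x : Fin k → ℝ, ((∑ j, x j * z j - φ i x : ℝ) : EReal))
    -- `Ggrad v = ∇g*(v)`, the maximizer of `w ↦ wᵀv − g(w)` (so that
    -- `g*(v) = Ggrad v ᵀ v − g (Ggrad v)`):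
    (Ggrad : (Fin d → ℝ) → (Fin d → ℝ))
    (hGgrad : ∀ (v w' : Fin d → ℝ),
      (∑ j, w' j * v j) - g w' ≤ (∑ j, Ggrad v j * v j) - g (Ggrad v))
    -- primal and dual objectives:
    (vmap : (Fin n → Fin k → ℝ) → (Fin d → ℝ))
    (hvmap : ∀ β, vmap β = (1 / (lam * n)) • ∑ i, (X i).mulVec (β i))
    (P : (Fin d → ℝ) → ℝ)
    (hP : ∀ w, P w = (1 / n) * ∑ i, φ i ((X i).transpose.mulVec w) + lam * g w)
    (D : (Fin n → Fin k → ℝ) → EReal)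
    (hD : ∀ β, D β = ((1 / n : ℝ) : EReal) * (∑ i, -(fconj i (-(β i))))
        - ((lam * ((∑ j, Ggrad (vmap β) j * vmap β j) - g (Ggrad (vmap β))) : ℝ) : EReal))
    -- the Prox-SDCA trajectory: `αseq ω t` is the dual iterate after `t` steps
    -- when the random coordinate indices are `ω 0, ω 1, …`:
    (αseq : (ℕ → Fin n) → ℕ → (Fin n → Fin k → ℝ))
    (hinit : ∀ ω, αseq ω 0 = 0)
    (hadapt : ∀ ω ω' t, (∀ s < t, ω s = ω' s) → αseq ω t = αseq ω' t)
    -- Option I: the increment of column `ω t` maximizes the proximal dual objective: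
    (obj : (ℕ → Fin n) → ℕ → (Fin k → ℝ) → EReal)
    (hobj : ∀ ω t Δ, obj ω t Δ = -(fconj (ω t) (-(αseq ω t (ω t) + Δ)))
        - (((∑ j, Ggrad (vmap (αseq ω t)) j * (X (ω t)).mulVec Δ j)
          + (1 / (2 * lam * n)) * ND' ((X (ω t)).mulVec Δ) ^ 2 : ℝ) : EReal))
    (hupdate : ∀ ω t, ∃ Δ : Fin k → ℝ,
      αseq ω (t + 1) = Function.update (αseq ω t) (ω t) (αseq ω t (ω t) + Δ) ∧
      ∀ Δ' : Fin k → ℝ, obj ω t Δ' ≤ obj ω t Δ) :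
    -- conclusion: the expected average duality gap over iterations T₀+1,…,T is ≤ ε_P
    ∀ T₀ T : ℕ, T₀ < T →
      ((n : ℝ) + R ^ 2 / (lam * γ))
          * Real.log (((n : ℝ) + R ^ 2 / (lam * γ)) / (((T : ℝ) - (T₀ : ℝ)) * εP))
        ≤ (T₀ : ℝ) →
      ((1 / (n : ℝ) ^ T : ℝ) : EReal) * ∑ σ : Fin T → Fin n,
          (((1 / ((T : ℝ) - (T₀ : ℝ)) : ℝ) : EReal) * ∑ t ∈ Finset.Icc (T₀ + 1) T,
            (((P (Ggrad (vmap (αseq (fun s => if h : s < T then σ ⟨s, h⟩ else ⟨0, hn⟩) (t - 1)))) : ℝ) : EReal)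
              - D (αseq (fun s => if h : s < T then σ ⟨s, h⟩ else ⟨0, hn⟩) (t - 1))))
        ≤ ((εP : ℝ) : EReal) := by
  intro T₀ T hT hlog
  obtain rfl : fconj = fun i => fenchelConj (φ i) := funext fun i => funext (hfconj i)
  obtain rfl : vmap = dualAverage lam X := funext hvmap
  obtain rfl : P = primalObj φ g lam X := funext hP
  obtain rfl : obj = fun ω t => proxObj φ Ggrad lam X ND' (αseq ω t) (ω t) :=
    funext fun ω => funext fun t => funext (hobj ω t)
  set C := (n : ℝ) + R ^ 2 / (lam * γ)
  have hnC : (n : ℝ) ≤ C := le_add_of_nonneg_right (by positivity)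
  have hC1 : 1 ≤ C := (Nat.one_le_cast.2 hn).trans hnC
  have hC : 0 < C := one_pos.trans_le hC1
  -- step size `s = n / C`, for which `s R² = λ n γ (1 - s)`
  have hiter := sdca_iterate_ascent (s := n / C) hND hNP_smul hND' hNP'_nonneg hNP'_eq_zero
    hNP'_smul hXR hφconv hγ hφsmooth hgsc hGgrad hlam (by positivity) ((div_le_one hC).2 hnC)
    (le_of_eq (by simp only [C]; field_simp; ring)) hφnonneg hinit hupdate
  have hP0 : primalObj φ g lam X 0 ≤ 1 := by simpa [primalObj, hgzero] using hφzero
  have hgap := coordinateAscent_expected_gap_le ⟨0, hn⟩ αseq hadapt (realDual φ g Ggrad lam X)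
    (fun β => primalObj φ g lam X (Ggrad (dualAverage lam X β)))
    (fun β i => n / C / n * fenchelYoungGap φ X (Ggrad (dualAverage lam X β)) β i) (q := 1 / C)
    (by positivity) ((div_le_one hC).2 hC1) (fun ω t => (hiter ω t).2)
    (fun β => by rw [primalObj_sub_realDual hlam.ne', ← mul_sum]; field_simp)
    (fun ω t ω' t' => realDual_le_primalObj hlam hGgrad (hiter ω' t').1 _)
    (fun ω => by rw [hinit]; exact realDual_zero_nonneg hlam.le hφnonneg hgnonneg)
    (fun ω t => (realDual_le_primalObj hlam hGgrad (hiter ω t).1 0).trans hP0) (T₀ := T₀) hT.le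
  have hD' : ∀ ω t, D (αseq ω t) = (realDual φ g Ggrad lam X (αseq ω t) : EReal) :=
    fun ω t => (hD _).trans (coe_realDual (hiter ω t).1).symm
  simp only [hD', ← EReal.coe_sub, ← EReal.coe_finset_sum_s8, ← EReal.coe_mul, EReal.coe_le_coe_iff]
  convert one_div_sub_mul_le_of_log_le hC1 hεP hT hgap hlog using 1
  rw [← mul_sum, mul_left_comm]
  rfl

/-- Theorem 1, second part: for (1/γ)-smooth losses, if
`T₀ ≥ (n + R²/(λγ)) log((n + R²/(λγ))/((T − T₀)ε_P))` then the expected average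
duality gap over iterations `T₀+1,…,T` of Prox-SDCA (Option I) is at most `ε_P`.
The expectation is the average over all sequences of the i.i.d. uniform
coordinate indices. -/
theorem prox_sdca_smooth_average_duality_gap (d k n : ℕ) (hn : 0 < n)
    (lam γ R εP : ℝ) (hlam : 0 < lam) (hγ : 0 < γ) (hR : 0 ≤ R) (hεP : 0 < εP)
    -- ‖·‖_P, a norm on ℝ^k, and its dual norm ‖·‖_D:
    (NP : (Fin k → ℝ) → ℝ)
    (hNP_nonneg : ∀ x, 0 ≤ NP x)
    (hNP_eq_zero : ∀ x, NP x = 0 ↔ x = 0)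
    (hNP_add : ∀ x y, NP (x + y) ≤ NP x + NP y)
    (hNP_smul : ∀ (c : ℝ) (x : Fin k → ℝ), NP (c • x) = |c| * NP x)
    (ND : (Fin k → ℝ) → ℝ)
    (hND : ∀ z, IsLUB {r : ℝ | ∃ x : Fin k → ℝ, NP x = 1 ∧ r = ∑ j, z j * x j} (ND z))
    -- ‖·‖_{P'}, a norm on ℝ^d, and its dual norm ‖·‖_{D'}:
    (NP' : (Fin d → ℝ) → ℝ)
    (hNP'_nonneg : ∀ x, 0 ≤ NP' x)
    (hNP'_eq_zero : ∀ x, NP' x = 0 ↔ x = 0)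
    (hNP'_add : ∀ x y, NP' (x + y) ≤ NP' x + NP' y)
    (hNP'_smul : ∀ (c : ℝ) (x : Fin d → ℝ), NP' (c • x) = |c| * NP' x)
    (ND' : (Fin d → ℝ) → ℝ)
    (hND' : ∀ z, IsLUB {r : ℝ | ∃ x : Fin d → ℝ, NP' x = 1 ∧ r = ∑ j, z j * x j} (ND' z))
    -- data matrices, with operator norms bounded by R:
    (X : Fin n → Matrix (Fin d) (Fin k) ℝ)
    (hXR : ∀ i (z : Fin k → ℝ), ND' ((X i).mulVec z) ≤ R * ND z)
    -- the losses: convex, nonnegative, (1/γ)-smooth w.r.t. ‖·‖_P, small at 0: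
    (φ : Fin n → (Fin k → ℝ) → ℝ) (hφconv : ∀ i, ConvexOn ℝ Set.univ (φ i))
    (φgrad : Fin n → (Fin k → ℝ) → (Fin k → ℝ))
    (hφsmooth : ∀ i a b, φ i a ≤ φ i b + (∑ j, φgrad i b j * (a j - b j))
        + (1 / (2 * γ)) * NP (a - b) ^ 2)
    (hφnonneg : ∀ i a, 0 ≤ φ i a)
    (hφzero : (1 / n) * ∑ i, φ i 0 ≤ 1)
    -- the regularizer: convex, 1-strongly convex w.r.t. ‖·‖_{P'}, normalized:
    (g : (Fin d → ℝ) → ℝ) (hgconv : ConvexOn ℝ Set.univ g)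
    (hgsc : ∀ (w₁ w₂ : Fin d → ℝ) (t : ℝ), 0 ≤ t → t ≤ 1 →
      g (t • w₁ + (1 - t) • w₂) ≤ t * g w₁ + (1 - t) * g w₂
        - (t * (1 - t) / 2) * NP' (w₁ - w₂) ^ 2)
    (hgzero : g 0 = 0) (hgnonneg : ∀ w, 0 ≤ g w)
    -- conjugates of the losses:
    (fconj : Fin n → (Fin k → ℝ) → EReal)
    (hfconj : ∀ i z, fconj i z = ⨆ x : Fin k → ℝ, ((∑ j, x j * z j - φ i x : ℝ) : EReal))
    -- `Ggrad v = ∇g*(v)`, the maximizer of `w ↦ wᵀv − g(w)` (so that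
    -- `g*(v) = Ggrad v ᵀ v − g (Ggrad v)`):
    (Ggrad : (Fin d → ℝ) → (Fin d → ℝ))
    (hGgrad : ∀ (v w' : Fin d → ℝ),
      (∑ j, w' j * v j) - g w' ≤ (∑ j, Ggrad v j * v j) - g (Ggrad v))
    -- primal and dual objectives:
    (vmap : (Fin n → Fin k → ℝ) → (Fin d → ℝ))
    (hvmap : ∀ β, vmap β = (1 / (lam * n)) • ∑ i, (X i).mulVec (β i))
    (P : (Fin d → ℝ) → ℝ)
    (hP : ∀ w, P w = (1 / n) * ∑ i, φ i ((X i).transpose.mulVec w) + lam * g w)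
    (D : (Fin n → Fin k → ℝ) → EReal)
    (hD : ∀ β, D β = ((1 / n : ℝ) : EReal) * (∑ i, -(fconj i (-(β i))))
        - ((lam * ((∑ j, Ggrad (vmap β) j * vmap β j) - g (Ggrad (vmap β))) : ℝ) : EReal))
    -- the Prox-SDCA trajectory: `αseq ω t` is the dual iterate after `t` steps
    -- when the random coordinate indices are `ω 0, ω 1, …`:
    (αseq : (ℕ → Fin n) → ℕ → (Fin n → Fin k → ℝ))
    (hinit : ∀ ω, αseq ω 0 = 0)
    (hadapt : ∀ ω ω' t, (∀ s < t, ω s = ω' s) → αseq ω t = αseq ω' t)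
    -- Option I: the increment of column `ω t` maximizes the proximal dual objective:
    (obj : (ℕ → Fin n) → ℕ → (Fin k → ℝ) → EReal)
    (hobj : ∀ ω t Δ, obj ω t Δ = -(fconj (ω t) (-(αseq ω t (ω t) + Δ)))
        - (((∑ j, Ggrad (vmap (αseq ω t)) j * (X (ω t)).mulVec Δ j)
          + (1 / (2 * lam * n)) * ND' ((X (ω t)).mulVec Δ) ^ 2 : ℝ) : EReal))
    (hupdate : ∀ ω t, ∃ Δ : Fin k → ℝ,
      αseq ω (t + 1) = Function.update (αseq ω t) (ω t) (αseq ω t (ω t) + Δ) ∧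
      ∀ Δ' : Fin k → ℝ, obj ω t Δ' ≤ obj ω t Δ) :
    -- conclusion: the expected average duality gap over iterations T₀+1,…,T is ≤ ε_P
    ∀ T₀ T : ℕ, T₀ < T →
      ((n : ℝ) + R ^ 2 / (lam * γ))
          * Real.log (((n : ℝ) + R ^ 2 / (lam * γ)) / (((T : ℝ) - (T₀ : ℝ)) * εP))
        ≤ (T₀ : ℝ) →
      ((1 / (n : ℝ) ^ T : ℝ) : EReal) * ∑ σ : Fin T → Fin n,
          (((1 / ((T : ℝ) - (T₀ : ℝ)) : ℝ) : EReal) * ∑ t ∈ Finset.Icc (T₀ + 1) T,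
            (((P (Ggrad (vmap (αseq (fun s => if h : s < T then σ ⟨s, h⟩ else ⟨0, hn⟩) (t - 1)))) : ℝ) : EReal)
              - D (αseq (fun s => if h : s < T then σ ⟨s, h⟩ else ⟨0, hn⟩) (t - 1))))
        ≤ ((εP : ℝ) : EReal) :=
  prox_sdca_smooth_average_duality_gap_general d k n hn lam γ R εP hlam hγ hεP NP hNP_smul ND hND
    NP' hNP'_nonneg hNP'_eq_zero hNP'_smul ND' hND' X hXR φ hφconv φgrad hφsmooth hφnonneg hφzero g
    hgsc hgzero hgnonneg fconj hfconj Ggrad hGgrad vmap hvmap P hP D hD αseq hinit hadapt obj hobj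
    hupdate
end

section
/- Let 1 < q < 2, c > 0, b ≥ 0, and v ∈ ℝ^d, and consider minimizing the strictly convex function w ↦ −wᵀv + (c/2)‖w‖_q² + b‖w‖₁ over w ∈ ℝ^d. Then the minimizer w satisfies: w_i = 0 whenever |v_i| ≤ b, and w_i = sign(v_i) · ( a·(|v_i| − b) )^{1/(q−1)} whenever |v_i| > b, where a = ( (1/c) · ( ∑_{i : |v_i| > b} (|v_i| − b)^{q/(q−1)} )^{(q−2)/q} )^{q−1} (with w = 0 when the set {i : |v_i| > b} is empty). -/
/-! With `u = (|v| - b)₊` and `p = q/(q-1)` the exponent conjugate to `q`, the bound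
`f(w) ≥ -‖u‖_p²/(2c)` is the sum of three nonnegative gaps: coordinatewise
`w_i v_i - b|w_i| ≤ |w_i| u_i`, Hölder `∑ |w_i| u_i ≤ ‖u‖_p ‖w‖_q`, and AM-GM
`‖u‖_p ‖w‖_q ≤ ‖u‖_p²/(2c) + (c/2)‖w‖_q²`. The point `sign(v) (‖u‖_p/c) (u/‖u‖_p)^(p-1)` closes
all three gaps, so every minimizer closes them as well, and the equality cases of Young's inequality
and of the coordinatewise bound force it to be that point. -/

open Finset Real

section EllNorm

variable {ι : Type*} [Fintype ι] {p q : ℝ}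

noncomputable def ellNorm (p : ℝ) (x : ι → ℝ) : ℝ := (∑ i, |x i| ^ p) ^ (1 / p)

lemma ellNorm_nonneg (p : ℝ) (x : ι → ℝ) : 0 ≤ ellNorm p x :=
  rpow_nonneg (sum_nonneg fun _ _ => rpow_nonneg (abs_nonneg _) p) _

lemma ellNorm_rpow (hp : p ≠ 0) (x : ι → ℝ) : ellNorm p x ^ p = ∑ i, |x i| ^ p := by
  rw [ellNorm, ← rpow_mul (sum_nonneg fun _ _ => rpow_nonneg (abs_nonneg _) p),
    one_div_mul_cancel hp, rpow_one]

lemma eq_zero_of_ellNorm_eq_zero (hp : 0 < p) {x : ι → ℝ} (hx : ellNorm p x = 0) : x = 0 := by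
  have hsum : ∑ i, |x i| ^ p = 0 := by rw [← ellNorm_rpow hp.ne', hx, zero_rpow hp.ne']
  funext i
  have hi := (sum_eq_zero_iff_of_nonneg fun j _ => rpow_nonneg (abs_nonneg (x j)) p).1 hsum i
    (mem_univ i)
  exact abs_eq_zero.1 ((rpow_eq_zero (abs_nonneg _) hp.ne').1 hi)

lemma sum_abs_div_ellNorm_rpow (hp : p ≠ 0) {x : ι → ℝ} (hx : ellNorm p x ≠ 0) :
    ∑ i, (|x i| / ellNorm p x) ^ p = 1 := by
  simp_rw [div_rpow (abs_nonneg _) (ellNorm_nonneg p x)]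
  rw [← sum_div, ← ellNorm_rpow hp, div_self (rpow_pos_of_pos
    ((ellNorm_nonneg p x).lt_of_ne' hx) p).ne']

lemma sum_abs_mul_abs_le_ellNorm_mul (hpq : p.HolderConjugate q) (x y : ι → ℝ) :
    ∑ i, |x i| * |y i| ≤ ellNorm p x * ellNorm q y := by
  simpa only [abs_abs, ellNorm] using inner_le_Lp_mul_Lq univ (fun i => |x i|) (fun i => |y i|) hpq

lemma div_ellNorm_rpow_eq_of_sum_abs_mul_abs_eq (hpq : p.HolderConjugate q) {x y : ι → ℝ}
    (hx : ellNorm p x ≠ 0) (hy : ellNorm q y ≠ 0)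
    (h : ∑ i, |x i| * |y i| = ellNorm p x * ellNorm q y) (i : ι) :
    (|x i| / ellNorm p x) ^ p = (|y i| / ellNorm q y) ^ q := by
  set X := ellNorm p x
  set Y := ellNorm q y
  have hgap : ∀ j ∈ univ, 0 ≤ (|x j| / X) ^ p / p + (|y j| / Y) ^ q / q - |x j| / X * (|y j| / Y) :=
    fun j _ => sub_nonneg.2 (young_inequality_of_nonneg (div_nonneg (abs_nonneg _)
      (ellNorm_nonneg p x)) (div_nonneg (abs_nonneg _) (ellNorm_nonneg q y)) hpq)
  have hsum : ∑ j, ((|x j| / X) ^ p / p + (|y j| / Y) ^ q / q - |x j| / X * (|y j| / Y)) = 0 := by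
    simp_rw [div_mul_div_comm]
    rw [sum_sub_distrib, sum_add_distrib, ← sum_div, ← sum_div, ← sum_div,
      sum_abs_div_ellNorm_rpow hpq.ne_zero hx, sum_abs_div_ellNorm_rpow hpq.symm.ne_zero hy, h,
      div_self (mul_ne_zero hx hy), one_div, one_div, hpq.inv_add_inv_eq_one, sub_self]
  have hi := (sum_eq_zero_iff_of_nonneg hgap).1 hsum i (mem_univ i)
  exact (young_inequality_eq_iff_of_nonneg (div_nonneg (abs_nonneg _) (ellNorm_nonneg p x))
    (div_nonneg (abs_nonneg _) (ellNorm_nonneg q y)) hpq).1 (by linarith)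

end EllNorm

section HolderDual

variable {ι : Type*} [Fintype ι] {p q : ℝ}

noncomputable def holderDual (p : ℝ) (x : ι → ℝ) : ι → ℝ :=
  fun i => (|x i| / ellNorm p x) ^ (p - 1)

lemma holderDual_nonneg (p : ℝ) (x : ι → ℝ) (i : ι) : 0 ≤ holderDual p x i :=
  rpow_nonneg (div_nonneg (abs_nonneg _) (ellNorm_nonneg p x)) _

lemma holderDual_eq_zero (hp : 1 < p) {x : ι → ℝ} {i : ι} (hx : x i = 0) :
    holderDual p x i = 0 := by
  rw [holderDual, hx, abs_zero, zero_div, zero_rpow (by linarith)]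

lemma ellNorm_eq_mul_of_abs_eq (hp : 0 < p) {x y : ι → ℝ} {a : ℝ} (ha : 0 ≤ a)
    (h : ∀ i, |y i| = a * |x i|) : ellNorm p y = a * ellNorm p x := by
  simp_rw [ellNorm, h, mul_rpow ha (abs_nonneg _), ← mul_sum]
  rw [mul_rpow (rpow_nonneg ha p) (sum_nonneg fun _ _ => rpow_nonneg (abs_nonneg _) p),
    ← rpow_mul ha, mul_one_div_cancel hp.ne', rpow_one]

lemma ellNorm_holderDual (hpq : p.HolderConjugate q) {x : ι → ℝ} (hx : ellNorm p x ≠ 0) :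
    ellNorm q (holderDual p x) = 1 := by
  have hsum : ∑ i, |holderDual p x i| ^ q = 1 := by
    simp_rw [abs_of_nonneg (holderDual_nonneg p x _), holderDual,
      ← rpow_mul (div_nonneg (abs_nonneg _) (ellNorm_nonneg p x)), hpq.sub_one_mul_conj]
    exact sum_abs_div_ellNorm_rpow hpq.ne_zero hx
  rw [ellNorm, hsum, one_rpow]

lemma sum_abs_mul_holderDual (hpq : p.HolderConjugate q) (x : ι → ℝ) :
    ∑ i, |x i| * holderDual p x i = ellNorm p x := by
  set X := ellNorm p x
  rcases eq_or_ne X 0 with hX | hX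
  · simp [eq_zero_of_ellNorm_eq_zero hpq.pos hX, hX]
  have hterm : ∀ i, |x i| * holderDual p x i = X * (|x i| / X) ^ p := fun i => by
    have hxi : 0 ≤ |x i| / X := div_nonneg (abs_nonneg _) (ellNorm_nonneg p x)
    show |x i| * (|x i| / X) ^ (p - 1) = _
    nth_rewrite 1 [← mul_div_cancel₀ |x i| hX]
    rw [mul_assoc, ← rpow_one_add' hxi (by simpa using hpq.ne_zero), add_sub_cancel]
  rw [sum_congr rfl fun i _ => hterm i, ← mul_sum, sum_abs_div_ellNorm_rpow hpq.ne_zero hX,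
    mul_one]

lemma abs_eq_ellNorm_mul_holderDual (hpq : p.HolderConjugate q) {x y : ι → ℝ}
    (hx : ellNorm p x ≠ 0) (hy : ellNorm q y ≠ 0)
    (h : ∑ i, |x i| * |y i| = ellNorm p x * ellNorm q y) (i : ι) :
    |y i| = ellNorm q y * holderDual p x i := by
  have hyi : 0 ≤ |y i| / ellNorm q y := div_nonneg (abs_nonneg _) (ellNorm_nonneg q y)
  have hpow := div_ellNorm_rpow_eq_of_sum_abs_mul_abs_eq hpq hx hy h i
  have hdiv : |y i| / ellNorm q y = holderDual p x i :=
    calc |y i| / ellNorm q y = ((|y i| / ellNorm q y) ^ q) ^ (1 / q) := by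
          rw [← rpow_mul hyi, mul_one_div_cancel hpq.symm.ne_zero, rpow_one]
      _ = ((|x i| / ellNorm p x) ^ p) ^ (1 / q) := by rw [hpow]
      _ = holderDual p x i := by
          rw [← rpow_mul (div_nonneg (abs_nonneg _) (ellNorm_nonneg p x)), mul_one_div,
            hpq.div_conj_eq_sub_one, holderDual]
  rw [← hdiv, mul_div_cancel₀ _ hy]

end HolderDual

section Coordinate

variable {w v b m : ℝ}

lemma mul_sub_mul_abs_le (w v b : ℝ) : w * v - b * |w| ≤ |w| * max (|v| - b) 0 := by
  have hwv : w * v ≤ |w| * |v| := (le_abs_self _).trans (abs_mul w v).le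
  have hmax : |w| * (|v| - b) ≤ |w| * max (|v| - b) 0 :=
    mul_le_mul_of_nonneg_left (le_max_left _ _) (abs_nonneg w)
  linarith

lemma eq_sign_mul_abs_of_mul_sub_mul_abs_eq (hv : v ≠ 0)
    (h : w * v - b * |w| = |w| * max (|v| - b) 0) : w = sign v * |w| := by
  have hwv : w * v = |w| * |v| := by
    have hle : w * v ≤ |w| * |v| := (le_abs_self _).trans (abs_mul w v).le
    rcases le_total (|v| - b) 0 with hvb | hvb
    · rw [max_eq_right hvb] at h
      nlinarith [abs_nonneg w]
    · rw [max_eq_left hvb] at h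
      linarith
  rcases hv.lt_or_gt with hv | hv
  · rw [abs_of_neg hv] at hwv
    rw [sign_of_neg hv]
    linarith [mul_right_cancel₀ hv.ne (show w * v = -|w| * v by linarith)]
  · rw [abs_of_pos hv] at hwv
    rw [sign_of_pos hv, one_mul]
    exact mul_right_cancel₀ hv.ne' hwv

lemma sign_mul_mul_sub_mul_abs (hm : 0 ≤ m) (hm0 : |v| ≤ b → m = 0) :
    sign v * m * v - b * |sign v * m| = |sign v * m| * max (|v| - b) 0 := by
  by_cases hvb : |v| ≤ b
  · simp [hm0 hvb]
  rw [max_eq_left (by linarith)]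
  rcases lt_trichotomy v 0 with hv | rfl | hv
  · rw [sign_of_neg hv, abs_of_neg hv, neg_one_mul, abs_neg, abs_of_nonneg hm]
    ring
  · simp
  · rw [sign_of_pos hv, abs_of_pos hv, one_mul, abs_of_nonneg hm]
    ring

end Coordinate

def shrink {ι : Type*} (b : ℝ) (v : ι → ℝ) : ι → ℝ := fun i => max (|v i| - b) 0

lemma abs_shrink {ι : Type*} (b : ℝ) (v : ι → ℝ) (i : ι) : |shrink b v i| = shrink b v i :=
  abs_of_nonneg (le_max_right _ _)

lemma shrink_eq_zero_of_le {ι : Type*} {b : ℝ} {v : ι → ℝ} {i : ι} (h : |v i| ≤ b) :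
    shrink b v i = 0 :=
  max_eq_right (by linarith)

section Prox

variable {ι : Type*} [Fintype ι] {p q c b : ℝ}

noncomputable def objective (q c b : ℝ) (v w : ι → ℝ) : ℝ :=
  -(∑ i, w i * v i) + c / 2 * ellNorm q w ^ 2 + b * ∑ i, |w i|

lemma objective_eq (q c b : ℝ) (v w : ι → ℝ) :
    objective q c b v w = -∑ i, (w i * v i - b * |w i|) + c / 2 * ellNorm q w ^ 2 := by
  rw [objective, sum_sub_distrib, ← mul_sum]
  ring

noncomputable def proxPoint (p c b : ℝ) (v : ι → ℝ) : ι → ℝ :=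
  fun i => sign (v i) * (ellNorm p (shrink b v) / c * holderDual p (shrink b v) i)

lemma equalities_of_objective_le (hpq : p.HolderConjugate q) (hc : 0 < c) {v w : ι → ℝ}
    (h : objective q c b v w ≤ -(ellNorm p (shrink b v) ^ 2 / (2 * c))) :
    (∀ i, w i * v i - b * |w i| = |w i| * shrink b v i) ∧
      ∑ i, |shrink b v i| * |w i| = ellNorm p (shrink b v) * ellNorm q w ∧
      c * ellNorm q w = ellNorm p (shrink b v) := by
  set u := shrink b v
  set U := ellNorm p u
  set N := ellNorm q w
  have hgap : ∀ i ∈ univ, 0 ≤ |w i| * u i - (w i * v i - b * |w i|) :=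
    fun i _ => sub_nonneg.2 (mul_sub_mul_abs_le _ _ _)
  have hholder : ∑ i, |u i| * |w i| ≤ U * N := sum_abs_mul_abs_le_ellNorm_mul hpq u w
  have hsq : 0 ≤ (c * N - U) ^ 2 / (2 * c) := by positivity
  have hdecomp : objective q c b v w + U ^ 2 / (2 * c) =
      ∑ i, (|w i| * u i - (w i * v i - b * |w i|)) + (U * N - ∑ i, |u i| * |w i|)
        + (c * N - U) ^ 2 / (2 * c) := by
    simp_rw [objective_eq, sum_sub_distrib, u, abs_shrink, mul_comm (shrink b v _)]
    field_simp
    ring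
  have hsum : ∑ i, (|w i| * u i - (w i * v i - b * |w i|)) = 0 := by
    linarith [sum_nonneg hgap]
  refine ⟨fun i => ?_, by linarith [sum_nonneg hgap], ?_⟩
  · linarith [(sum_eq_zero_iff_of_nonneg hgap).1 hsum i (mem_univ i)]
  · have hgap3 : (c * N - U) ^ 2 / (2 * c) = 0 := by linarith [sum_nonneg hgap]
    have hcN : c * N - U = 0 := by simpa [hc.ne'] using hgap3
    linarith

lemma eq_proxPoint_of_objective_le (hpq : p.HolderConjugate q) (hc : 0 < c) (hb : 0 ≤ b)
    {v w : ι → ℝ} (h : objective q c b v w ≤ -(ellNorm p (shrink b v) ^ 2 / (2 * c))) :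
    w = proxPoint p c b v := by
  obtain ⟨hcoord, hholder, hnorm⟩ := equalities_of_objective_le hpq hc h
  set u := shrink b v
  set U := ellNorm p u
  rcases eq_or_ne U 0 with hU | hU
  · have hw : w = 0 := eq_zero_of_ellNorm_eq_zero hpq.symm.pos
      ((mul_eq_zero.1 (hnorm.trans hU)).resolve_left hc.ne')
    funext i
    rw [hw, proxPoint]
    change (0 : ℝ) = sign (v i) * (U / c * _)
    rw [hU, zero_div, zero_mul, mul_zero]
  have hN : ellNorm q w = U / c := by rw [← hnorm, mul_div_cancel_left₀ _ hc.ne']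
  have hmag : ∀ i, |w i| = U / c * holderDual p u i := fun i => by
    rw [← hN]
    exact abs_eq_ellNorm_mul_holderDual hpq hU (hN ▸ div_ne_zero hU hc.ne') hholder i
  funext i
  rw [proxPoint, ← hmag i]
  rcases eq_or_ne (v i) 0 with hv | hv
  · have hwi : w i = 0 := abs_eq_zero.1 <| by
      rw [hmag i, holderDual_eq_zero hpq.lt (shrink_eq_zero_of_le (by simpa [hv] using hb)),
        mul_zero]
    simp [hwi]
  · exact eq_sign_mul_abs_of_mul_sub_mul_abs_eq hv (hcoord i)

lemma abs_proxPoint (hp : 1 < p) (hc : 0 ≤ c) (hb : 0 ≤ b) (v : ι → ℝ) (i : ι) :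
    |proxPoint p c b v i| = ellNorm p (shrink b v) / c * holderDual p (shrink b v) i := by
  have hm : 0 ≤ ellNorm p (shrink b v) / c * holderDual p (shrink b v) i :=
    mul_nonneg (div_nonneg (ellNorm_nonneg _ _) hc) (holderDual_nonneg _ _ _)
  rcases eq_or_ne (v i) 0 with hv | hv
  · rw [proxPoint, holderDual_eq_zero hp (shrink_eq_zero_of_le (by simpa [hv] using hb))]
    simp
  · rw [proxPoint, abs_mul, abs_of_nonneg hm]
    rcases sign_apply_eq_of_ne_zero _ hv with hs | hs <;> simp [hs]

lemma objective_proxPoint (hpq : p.HolderConjugate q) (hc : 0 < c) (hb : 0 ≤ b) (v : ι → ℝ) :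
    objective q c b v (proxPoint p c b v) = -(ellNorm p (shrink b v) ^ 2 / (2 * c)) := by
  set u := shrink b v
  set U := ellNorm p u
  have hcoord : ∀ i, proxPoint p c b v i * v i - b * |proxPoint p c b v i|
      = |proxPoint p c b v i| * u i := fun i =>
    sign_mul_mul_sub_mul_abs (mul_nonneg (div_nonneg (ellNorm_nonneg _ _) hc.le)
      (holderDual_nonneg _ _ _)) fun h => by
        rw [holderDual_eq_zero hpq.lt (shrink_eq_zero_of_le h), mul_zero]
  have hinner : ∑ i, |proxPoint p c b v i| * u i = U ^ 2 / c :=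
    calc ∑ i, |proxPoint p c b v i| * u i = U / c * ∑ i, |u i| * holderDual p u i := by
          rw [mul_sum]
          refine sum_congr rfl fun i _ => ?_
          rw [abs_proxPoint hpq.lt hc.le hb, abs_shrink]
          ring
      _ = U ^ 2 / c := by rw [sum_abs_mul_holderDual hpq]; ring
  have hnorm : ellNorm q (proxPoint p c b v) = U / c := by
    have habs : ∀ i, |proxPoint p c b v i| = U / c * |holderDual p u i| := fun i => by
      rw [abs_proxPoint hpq.lt hc.le hb, abs_of_nonneg (holderDual_nonneg _ _ _)]
    rw [ellNorm_eq_mul_of_abs_eq hpq.symm.pos (div_nonneg (ellNorm_nonneg _ _) hc.le) habs]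
    rcases eq_or_ne U 0 with hU | hU
    · simp only [U] at hU ⊢
      rw [hU, zero_div, zero_mul]
    · rw [ellNorm_holderDual hpq hU, mul_one]
  rw [objective_eq, sum_congr rfl fun i _ => hcoord i, hinner, hnorm]
  field_simp
  ring

end Prox

section Formula

variable {ι : Type*} [Fintype ι] {p q c b : ℝ}

lemma ellNorm_shrink (hp : 0 < p) (b : ℝ) (v : ι → ℝ) :
    ellNorm p (shrink b v) = (∑ i ∈ univ.filter fun i => b < |v i|, (|v i| - b) ^ p) ^ (1 / p) := by
  rw [ellNorm, sum_filter]
  congr 1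
  refine sum_congr rfl fun i _ => ?_
  split_ifs with h
  · rw [abs_shrink, shrink, max_eq_left (by linarith)]
  · rw [shrink_eq_zero_of_le (not_lt.1 h), abs_zero, zero_rpow hp.ne']

lemma proxPoint_apply_of_le (hp : 1 < p) {v : ι → ℝ} {i : ι} (h : |v i| ≤ b) :
    proxPoint p c b v i = 0 := by
  rw [proxPoint, holderDual_eq_zero hp (shrink_eq_zero_of_le h), mul_zero, mul_zero]

lemma proxPoint_apply_of_lt (hq : 1 < q) (hc : 0 ≤ c) {v : ι → ℝ} {i : ι} (h : b < |v i|) :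
    proxPoint (q / (q - 1)) c b v i = sign (v i) * (((1 / c) * ((∑ i ∈ univ.filter fun i =>
      b < |v i|, (|v i| - b) ^ (q / (q - 1))) ^ ((q - 2) / q))) ^ (q - 1) * (|v i| - b)) ^
        (1 / (q - 1)) := by
  set S := ∑ i ∈ univ.filter fun i => b < |v i|, (|v i| - b) ^ (q / (q - 1))
  have hq0 : 0 < q - 1 := by linarith
  have hub : 0 < |v i| - b := by linarith
  have hS : 0 < S := by
    refine sum_pos' (fun j hj => rpow_nonneg (by linarith [(mem_filter.1 hj).2]) _) ⟨i, ?_, ?_⟩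
    · exact mem_filter.2 ⟨mem_univ i, h⟩
    · exact rpow_pos_of_pos hub _
  have hU : ellNorm (q / (q - 1)) (shrink b v) = S ^ ((q - 1) / q) := by
    rw [ellNorm_shrink (by positivity), one_div_div]
  have hexp : q / (q - 1) - 1 = 1 / (q - 1) := by field_simp; ring
  rw [proxPoint, holderDual, hU, abs_shrink, shrink, max_eq_left hub.le, hexp]
  congr 1
  have hsplit : S ^ ((q - 1) / q) = S ^ ((q - 2) / q) * S ^ ((q - 1) / q * (1 / (q - 1))) := by
    rw [← rpow_add hS]
    congr 1
    field_simp
    ring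
  have hSr : S ^ ((q - 1) / q * (1 / (q - 1))) ≠ 0 := (rpow_pos_of_pos hS _).ne'
  rw [mul_rpow (rpow_nonneg (mul_nonneg (by positivity) (rpow_nonneg hS.le _)) _) hub.le,
    ← rpow_mul (mul_nonneg (by positivity) (rpow_nonneg hS.le _)), mul_one_div_cancel hq0.ne',
    rpow_one, div_rpow hub.le (rpow_nonneg hS.le _), ← rpow_mul hS.le, hsplit]
  field_simp

end Formula

theorem qnorm_l1_prox_formula_general (d : ℕ) (q c b : ℝ)
    (hq1 : 1 < q) (hc : 0 < c) (hb : 0 ≤ b)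
    (v : Fin d → ℝ)
    (f : (Fin d → ℝ) → ℝ)
    (hf : ∀ w, f w = -(∑ i, w i * v i)
        + (c / 2) * ((∑ i, |w i| ^ q) ^ (1 / q)) ^ (2:ℕ)
        + b * ∑ i, |w i|)
    (wstar : Fin d → ℝ) (hmin : ∀ w, f wstar ≤ f w)
    (a : ℝ)
    (ha : a = ((1 / c) * ((∑ i ∈ Finset.univ.filter fun i => b < |v i|,
        (|v i| - b) ^ (q / (q - 1))) ^ ((q - 2) / q))) ^ (q - 1)) :
    ∀ i, (|v i| ≤ b → wstar i = 0) ∧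
      (b < |v i| → wstar i = Real.sign (v i) * (a * (|v i| - b)) ^ (1 / (q - 1))) := by
  have hpq : (q / (q - 1)).HolderConjugate q := (HolderConjugate.conjExponent hq1).symm
  have hopt : objective q c b v wstar ≤ -(ellNorm (q / (q - 1)) (shrink b v) ^ 2 / (2 * c)) := by
    rw [← objective_proxPoint hpq hc hb v]
    have hcmp := hmin (proxPoint (q / (q - 1)) c b v)
    rwa [hf, hf] at hcmp
  rw [eq_proxPoint_of_objective_le hpq hc hb hopt, ha]
  exact fun i => ⟨proxPoint_apply_of_le hpq.lt, proxPoint_apply_of_lt hq1 hc.le⟩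

/-- closed form of the minimizer of
`w ↦ −wᵀv + (c/2)‖w‖_q² + b‖w‖₁` for `1 < q < 2` (the gradient of the
conjugate of `g(w) = (c/2)‖w‖_q² + b‖w‖₁`). -/
theorem qnorm_l1_prox_formula (d : ℕ) (q c b : ℝ)
    (hq1 : 1 < q) (hq2 : q < 2) (hc : 0 < c) (hb : 0 ≤ b)
    (v : Fin d → ℝ)
    (f : (Fin d → ℝ) → ℝ)
    (hf : ∀ w, f w = -(∑ i, w i * v i)
        + (c / 2) * ((∑ i, |w i| ^ q) ^ (1 / q)) ^ (2:ℕ)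
        + b * ∑ i, |w i|)
    (wstar : Fin d → ℝ) (hmin : ∀ w, f wstar ≤ f w)
    (a : ℝ)
    (ha : a = ((1 / c) * ((∑ i ∈ Finset.univ.filter fun i => b < |v i|,
        (|v i| - b) ^ (q / (q - 1))) ^ ((q - 2) / q))) ^ (q - 1)) :
    ∀ i, (|v i| ≤ b → wstar i = 0) ∧
      (b < |v i| → wstar i = Real.sign (v i) * (a * (|v i| - b)) ^ (1 / (q - 1))) :=
  qnorm_l1_prox_formula_general d q c b hq1 hc hb v f hf wstar hmin a ha
end
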